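/- arXiv:1509.01877 — 4 statements merged into one kernel-verified Lean document; each statement's English description precedes it below -/
import Mathlib

section
/- Let X ∈ ℝ^{n×d}, D ∈ ℝ^{l×d} with rows d₁,…,d_l, and τ > 0. For y ∈ ℝⁿ let β̂(y) ∈ argmin_{β ∈ ℝᵈ} (1/2)‖y − Xβ‖₂² + τ‖Dβ‖₁ be a generalized Lasso solution, and let θ̂(y) = X β̂(y) (the fitted value, which is unique). Then for Lebesgue-almost every y ∈ ℝⁿ, the map θ̂ is differentiable at y with divergence equal to dim(X ker(D₀)), where D₀ is the submatrix of D consisting of the rows d_i with d_iᵀ β̂(y) = 0, ker(D₀) = {x ∈ ℝᵈ : D₀ x = 0}, and X ker(D₀) is its image under X. -/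
/-!
On the set of observations `y` sharing the sign pattern of `D β̂(y)`, the stationarity conditions
of the Lasso say that the residuals `y - X β̂(y)` all have the same inner products with
`L = X ker(D₀)`, while the fits `X β̂(y)` differ by elements of `L`; hence the fit map agrees there
with `y ↦ P y + c`, where `P` is the orthogonal projection onto `L`. The fit map is Lipschitz (by
comparing two minimizers with their midpoint), so Rademacher's theorem makes it differentiable
almost everywhere. By Lebesgue's density theorem, almost every point of any set, measurable or not,
has a full tangent cone to that set, so at such a point the derivative is determined by the values
on the set: it is `P`, whose trace is `dim L`. As there are only finitely many sign patterns,
almost every `y` is such a point of the set of its own pattern.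
-/

open Matrix MeasureTheory Metric Filter Set
open scoped Topology

noncomputable def divg {n : ℕ} (f : (Fin n → ℝ) → (Fin n → ℝ)) (y : Fin n → ℝ) : ℝ :=
  ∑ i, fderiv ℝ f y (Pi.single i 1) i

section DensityPoints

variable {E : Type*} [NormedAddCommGroup E] [NormedSpace ℝ E] [MeasurableSpace E] [BorelSpace E]
  [SecondCountableTopology E] (μ : Measure E) [IsUnifLocDoublingMeasure μ] [IsLocallyFiniteMeasure μ]

theorem ae_eventually_inter_closedBall_nonempty (S : Set E) :
    ∀ᵐ x ∂μ.restrict S, ∀ (v : E) {r : ℝ}, 0 < r →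
      ∀ᶠ t in 𝓝[>] 0, (S ∩ closedBall (x + t • v) (r * t)).Nonempty := by
  -- The density theorem with eccentricity `k` only reaches balls of radius `≥ t ‖v‖ / k` around
  -- `x + t • v`; since `r` is arbitrary, all `k` are needed.
  filter_upwards [ae_all_iff.2 fun k : ℕ ↦
    IsUnifLocDoublingMeasure.ae_tendsto_measure_inter_div μ S k] with x hx v r hr
  obtain ⟨k, hk⟩ := exists_nat_ge (‖v‖ / r)
  have hδ : Tendsto (fun t : ℝ ↦ r * t) (𝓝[>] 0) (𝓝[>] 0) :=
    tendsto_nhdsWithin_of_tendsto_nhds_of_eventually_within _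
      (((continuous_const_mul r).tendsto' 0 0 (mul_zero r)).mono_left nhdsWithin_le_nhds)
      (eventually_nhdsWithin_of_forall fun t ht ↦ mul_pos hr ht)
  have hx_mem : ∀ᶠ t in 𝓝[>] (0 : ℝ), x ∈ closedBall (x + t • v) (k * (r * t)) := by
    filter_upwards [self_mem_nhdsWithin] with t (ht : 0 < t)
    rw [mem_closedBall, dist_self_add_right, norm_smul, Real.norm_of_nonneg ht.le]
    calc t * ‖v‖ = ‖v‖ / r * (r * t) := by field_simp
      _ ≤ k * (r * t) := by gcongr
  filter_upwards [(hx k _ _ hδ hx_mem).eventually_ne one_ne_zero] with t ht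
  by_contra h
  simp [not_nonempty_iff_eq_empty.1 h] at ht

theorem ae_tangentConeAt_eq_univ (S : Set E) :
    ∀ᵐ x ∂μ.restrict S, tangentConeAt ℝ S x = univ := by
  filter_upwards [ae_eventually_inter_closedBall_nonempty μ S] with x hx
  refine eq_univ_of_forall fun v ↦ ?_
  simp only [tangentConeAt_eq_biInter_closure, mem_iInter₂, Metric.mem_closure_iff]
  intro U hU ε hε
  obtain ⟨ρ, hρ, hρU⟩ := Metric.mem_nhds_iff.1 hU
  have hsmall : ∀ᶠ t in 𝓝[>] (0 : ℝ), t * (‖v‖ + ε / 2) < ρ :=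
    ((continuous_mul_const _).tendsto' 0 0 (zero_mul _)).mono_left nhdsWithin_le_nhds
      |>.eventually (gt_mem_nhds hρ)
  obtain ⟨t, ⟨z, hzS, hz⟩, hρt, ht : 0 < t⟩ :=
    ((hx v (half_pos hε)).and (hsmall.and self_mem_nhdsWithin)).exists
  rw [mem_closedBall, dist_eq_norm] at hz
  refine ⟨t⁻¹ • (z - x), ⟨t⁻¹, trivial, z - x, ⟨hρU ?_, by simpa⟩, rfl⟩, ?_⟩
  · rw [mem_ball_zero_iff]
    calc ‖z - x‖ ≤ ‖z - (x + t • v)‖ + ‖t • v‖ := by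
          simpa [sub_add_eq_sub_sub] using norm_sub_le_norm_sub_add_norm_sub (z - x) (t • v) 0
      _ ≤ ε / 2 * t + t * ‖v‖ := by
          rw [norm_smul, Real.norm_of_nonneg ht.le]; gcongr
      _ < ρ := by linarith
  · have hv : v - t⁻¹ • (z - x) = -(t⁻¹ • (z - (x + t • v))) := by
      rw [smul_sub, smul_sub, smul_add, inv_smul_smul₀ ht.ne']; abel
    calc dist v (t⁻¹ • (z - x)) = t⁻¹ * ‖z - (x + t • v)‖ := by
          rw [dist_eq_norm, hv, norm_neg, norm_smul, Real.norm_of_nonneg (inv_nonneg.2 ht.le)]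
      _ ≤ t⁻¹ * (ε / 2 * t) := by gcongr
      _ < ε := by field_simp; linarith

theorem ae_uniqueDiffWithinAt (S : Set E) :
    ∀ᵐ x ∂μ, x ∈ S → UniqueDiffWithinAt ℝ S x := by
  have h := ae_tangentConeAt_eq_univ μ S
  -- `S` need not be measurable; its measurable hull induces the same restricted measure.
  rw [← Measure.restrict_toMeasurable_of_sFinite,
    ae_restrict_iff' (measurableSet_toMeasurable μ S)] at h
  filter_upwards [h] with x hx hxS
  have hcone := hx (subset_toMeasurable μ S hxS)
  refine ⟨?_, mem_closure_of_nonempty_tangentConeAt (hcone ▸ univ_nonempty)⟩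
  simp [hcone]

end DensityPoints

theorem exists_lipschitzWith_of_sum_sq_le {ι : Type*} [Fintype ι] {f : (ι → ℝ) → (ι → ℝ)} {C : ℝ}
    (hf : ∀ z z', ∑ i, (f z i - f z' i) ^ 2 ≤ C * ∑ i, (z i - z' i) ^ 2) :
    ∃ K, LipschitzWith K f := by
  let e := EuclideanSpace.equiv ι ℝ
  have hg : LipschitzWith (Real.toNNReal √C) (e.symm ∘ f ∘ e) := by
    refine LipschitzWith.of_dist_le_mul fun a b ↦ ?_
    simp only [EuclideanSpace.dist_eq, Real.dist_eq, sq_abs,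
      Real.coe_toNNReal _ (Real.sqrt_nonneg _),
      ← Real.sqrt_mul' _ (Finset.sum_nonneg fun i _ ↦ sq_nonneg _)]
    exact Real.sqrt_le_sqrt (hf _ _)
  have hf_eq : (e ∘ (e.symm ∘ f ∘ e)) ∘ e.symm = f := by ext; simp
  exact ⟨_, hf_eq ▸ (e.lipschitz.comp hg).comp e.symm.lipschitz⟩

theorem hasDerivAt_sum_abs_add_mul {ρ : Type*} [Fintype ρ] {a b : ρ → ℝ}
    (hab : ∀ i, a i = 0 → b i = 0) :
    HasDerivAt (fun t ↦ ∑ i, |a i + t * b i|) (∑ i, (SignType.sign (a i) : ℝ) * b i) 0 := by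
  refine HasDerivAt.fun_sum fun i _ ↦ ?_
  by_cases ha : a i = 0
  · simp [ha, hab i ha, hasDerivAt_const]
  · exact (hasDerivAt_abs ha).comp_of_eq (0 : ℝ)
      ((hasDerivAt_mul_const (b i)).const_add (a i)) (by simp)

theorem divg_eq_trace {n : ℕ} (f : (Fin n → ℝ) → (Fin n → ℝ)) (y : Fin n → ℝ) :
    divg f y = LinearMap.trace ℝ (Fin n → ℝ) (fderiv ℝ f y) := by
  rw [LinearMap.trace_eq_matrix_trace ℝ (Pi.basisFun ℝ (Fin n)), LinearMap.toMatrix_eq_toMatrix',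
    Matrix.trace]
  simp [divg, LinearMap.toMatrix'_apply]

section DotProjection

variable {ι : Type*} [Fintype ι]

/-- Orthogonal projection onto `L` for the dot product, computed in `EuclideanSpace` since `ι → ℝ`
carries the sup norm. -/
noncomputable def dotProjection (L : Submodule ℝ (ι → ℝ)) : (ι → ℝ) →ₗ[ℝ] (ι → ℝ) :=
  (WithLp.linearEquiv 2 ℝ (ι → ℝ)).conj
    (L.comap (WithLp.linearEquiv 2 ℝ (ι → ℝ)).toLinearMap).starProjection.toLinearMap

theorem dotProjection_apply (L : Submodule ℝ (ι → ℝ)) (u : ι → ℝ) :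
    dotProjection L u = ((L.comap (WithLp.linearEquiv 2 ℝ (ι → ℝ)).toLinearMap).starProjection
      (WithLp.toLp 2 u)).ofLp :=
  rfl

theorem isProj_dotProjection (L : Submodule ℝ (ι → ℝ)) :
    LinearMap.IsProj L (dotProjection L) where
  map_mem x := by
    rw [dotProjection_apply]
    exact Submodule.starProjection_apply_mem
      (L.comap (WithLp.linearEquiv 2 ℝ (ι → ℝ)).toLinearMap) _
  map_id x hx := by
    rw [dotProjection_apply, Submodule.starProjection_eq_self_iff.2 hx]

theorem dotProjection_eq {L : Submodule ℝ (ι → ℝ)} {u v : ι → ℝ} (hv : v ∈ L)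
    (huv : ∀ w ∈ L, (u - v) ⬝ᵥ w = 0) : dotProjection L u = v := by
  rw [dotProjection_apply,
    Submodule.eq_starProjection_of_mem_of_inner_eq_zero (v := WithLp.toLp 2 v) hv]
  intro w hw
  simpa [EuclideanSpace.inner_eq_star_dotProduct, dotProduct_comm] using huv _ hw

end DotProjection

section Lasso

variable {ι κ ρ : Type*} [Fintype κ]

/-- `X ker(D_A)`, where `D_A` consists of the rows of `D` indexed by `A`. -/
def fitSpace (X : Matrix ι κ ℝ) (D : Matrix ρ κ ℝ) (A : Set ρ) : Submodule ℝ (ι → ℝ) :=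
  Submodule.map X.mulVecLin
    (⨅ i ∈ A, LinearMap.ker ((LinearMap.proj i : (ρ → ℝ) →ₗ[ℝ] ℝ).comp D.mulVecLin))

theorem mem_fitSpace {X : Matrix ι κ ℝ} {D : Matrix ρ κ ℝ} {A : Set ρ} {x : ι → ℝ} :
    x ∈ fitSpace X D A ↔ ∃ w, (∀ i ∈ A, (D *ᵥ w) i = 0) ∧ X *ᵥ w = x := by
  simp [fitSpace]

variable [Fintype ι] [Fintype ρ]

noncomputable def lassoObjective (X : Matrix ι κ ℝ) (D : Matrix ρ κ ℝ) (τ : ℝ) (y : ι → ℝ)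
    (β : κ → ℝ) : ℝ :=
  (1 / 2) * (∑ i, (y i - X.mulVec β i) ^ 2) + τ * (∑ i, |D.mulVec β i|)

variable {X : Matrix ι κ ℝ} {D : Matrix ρ κ ℝ} {τ : ℝ}

theorem hasDerivAt_lassoObjective_line (y : ι → ℝ) (β w : κ → ℝ)
    (hw : ∀ i, (D *ᵥ β) i = 0 → (D *ᵥ w) i = 0) :
    HasDerivAt (fun t : ℝ ↦ lassoObjective X D τ y (β + t • w))
      (-((y - X *ᵥ β) ⬝ᵥ X *ᵥ w) + τ * ∑ i, (SignType.sign ((D *ᵥ β) i) : ℝ) * (D *ᵥ w) i) 0 := by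
  have hquad : HasDerivAt (fun t : ℝ ↦ ∑ i, (y i - (X *ᵥ β) i - t * (X *ᵥ w) i) ^ 2)
      (-(2 * ((y - X *ᵥ β) ⬝ᵥ X *ᵥ w))) 0 := by
    refine (HasDerivAt.fun_sum (u := Finset.univ) fun i _ ↦
      ((hasDerivAt_mul_const (x := (0 : ℝ)) ((X *ᵥ w) i)).const_sub
        (y i - (X *ᵥ β) i)).pow 2).congr_deriv ?_
    simp only [dotProduct, Finset.mul_sum, ← Finset.sum_neg_distrib]
    refine Finset.sum_congr rfl fun i _ ↦ ?_
    simp only [Pi.sub_apply]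
    ring
  unfold lassoObjective
  simp only [mulVec_add, mulVec_smul, Pi.add_apply, Pi.smul_apply, smul_eq_mul, ← sub_sub]
  exact ((hquad.const_mul (1 / 2)).add
    ((hasDerivAt_sum_abs_add_mul hw).const_mul τ)).congr_deriv (by ring)

theorem lassoObjective_stationary {y : ι → ℝ} {β : κ → ℝ}
    (hβ : ∀ β', lassoObjective X D τ y β ≤ lassoObjective X D τ y β') (w : κ → ℝ)
    (hw : ∀ i, (D *ᵥ β) i = 0 → (D *ᵥ w) i = 0) :
    (y - X *ᵥ β) ⬝ᵥ X *ᵥ w = τ * ∑ i, (SignType.sign ((D *ᵥ β) i) : ℝ) * (D *ᵥ w) i := by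
  have hmin : IsLocalMin (fun t : ℝ ↦ lassoObjective X D τ y (β + t • w)) 0 :=
    Eventually.of_forall fun t ↦ by simpa using hβ (β + t • w)
  linarith [hmin.hasDerivAt_eq_zero (hasDerivAt_lassoObjective_line y β w hw)]

theorem lassoObjective_midpoint_le (hτ : 0 ≤ τ) (y : ι → ℝ) (β β' : κ → ℝ) :
    lassoObjective X D τ y ((1 / 2 : ℝ) • (β + β')) ≤
      (lassoObjective X D τ y β + lassoObjective X D τ y β') / 2 -
        (∑ i, ((X *ᵥ β) i - (X *ᵥ β') i) ^ 2) / 8 := by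
  have hquad : ∑ i, (y i - (X *ᵥ ((1 / 2 : ℝ) • (β + β'))) i) ^ 2 =
      (∑ i, (y i - (X *ᵥ β) i) ^ 2 + ∑ i, (y i - (X *ᵥ β') i) ^ 2) / 2 -
        (∑ i, ((X *ᵥ β) i - (X *ᵥ β') i) ^ 2) / 4 := by
    simp only [mulVec_smul, mulVec_add, Pi.smul_apply, Pi.add_apply, smul_eq_mul,
      ← Finset.sum_add_distrib, Finset.sum_div, ← Finset.sum_sub_distrib]
    exact Finset.sum_congr rfl fun i _ ↦ by ring
  have hpen : ∑ i, |(D *ᵥ ((1 / 2 : ℝ) • (β + β'))) i| ≤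
      (∑ i, |(D *ᵥ β) i| + ∑ i, |(D *ᵥ β') i|) / 2 := by
    simp only [mulVec_smul, mulVec_add, Pi.smul_apply, Pi.add_apply, smul_eq_mul,
      ← Finset.sum_add_distrib, Finset.sum_div]
    refine Finset.sum_le_sum fun i _ ↦ ?_
    rw [abs_mul, abs_of_pos (by norm_num : (0 : ℝ) < 1 / 2)]
    linarith [abs_add_le ((D *ᵥ β) i) ((D *ᵥ β') i)]
  unfold lassoObjective
  rw [hquad]
  nlinarith [mul_le_mul_of_nonneg_left hpen hτ]

theorem lassoFit_sum_sq_sub_le (hτ : 0 ≤ τ) {y y' : ι → ℝ} {β β' : κ → ℝ}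
    (hβ : ∀ b, lassoObjective X D τ y β ≤ lassoObjective X D τ y b)
    (hβ' : ∀ b, lassoObjective X D τ y' β' ≤ lassoObjective X D τ y' b) :
    ∑ i, ((X *ᵥ β) i - (X *ᵥ β') i) ^ 2 ≤ 4 * ∑ i, (y i - y' i) ^ 2 := by
  set G := ∑ i, ((X *ᵥ β) i - (X *ᵥ β') i) ^ 2
  set S := ∑ i, (y i - y' i) * ((X *ᵥ β) i - (X *ᵥ β') i)
  -- Comparing each minimizer with the midpoint of `β` and `β'` gives `G ≤ 2 S`.
  have h₁ := (hβ _).trans (lassoObjective_midpoint_le (D := D) hτ y β β')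
  have h₂ := (hβ' _).trans (lassoObjective_midpoint_le (D := D) hτ y' β β')
  have hS : lassoObjective X D τ y β - lassoObjective X D τ y' β -
      (lassoObjective X D τ y β' - lassoObjective X D τ y' β') = -S := by
    have hsq : ∑ i, (y i - (X *ᵥ β) i) ^ 2 - ∑ i, (y' i - (X *ᵥ β) i) ^ 2 -
        (∑ i, (y i - (X *ᵥ β') i) ^ 2 - ∑ i, (y' i - (X *ᵥ β') i) ^ 2) = -2 * S := by
      simp only [S, Finset.mul_sum, ← Finset.sum_sub_distrib]
      exact Finset.sum_congr rfl fun i _ ↦ by ring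
    simp only [lassoObjective]
    linarith
  have hGS : G ≤ 2 * S := by linarith
  have hCS : S ^ 2 ≤ (∑ i, (y i - y' i) ^ 2) * G := Finset.sum_mul_sq_le_sq_mul_sq _ _ _
  have hV : 0 ≤ ∑ i, (y i - y' i) ^ 2 := Finset.sum_nonneg fun i _ ↦ sq_nonneg _
  by_contra! h
  have hG : 0 < G := by linarith
  nlinarith [mul_self_le_mul_self hG.le hGS, mul_lt_mul_of_pos_left h hG]

theorem dotProjection_fitSpace_sub {z z' : ι → ℝ} {β β' : κ → ℝ}
    (hβ : ∀ b, lassoObjective X D τ z β ≤ lassoObjective X D τ z b)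
    (hβ' : ∀ b, lassoObjective X D τ z' β' ≤ lassoObjective X D τ z' b)
    (hsign : ∀ i, SignType.sign ((D *ᵥ β) i) = SignType.sign ((D *ᵥ β') i)) :
    dotProjection (fitSpace X D {i | (D *ᵥ β) i = 0}) (z - z') = X *ᵥ β - X *ᵥ β' := by
  have hzero : ∀ i, (D *ᵥ β) i = 0 ↔ (D *ᵥ β') i = 0 := fun i ↦ by
    rw [← sign_eq_zero_iff, hsign, sign_eq_zero_iff]
  refine dotProjection_eq (mem_fitSpace.2 ⟨β - β', fun i hi ↦ ?_, mulVec_sub _ _ _⟩) ?_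
  · rw [mulVec_sub, Pi.sub_apply, hi.out, (hzero i).1 hi, sub_zero]
  · intro x hx
    obtain ⟨w, hw, rfl⟩ := mem_fitSpace.1 hx
    have h₁ := lassoObjective_stationary hβ w hw
    have h₂ := lassoObjective_stationary hβ' w fun i hi ↦ hw i ((hzero i).2 hi)
    simp only [hsign] at h₁
    rw [sub_sub_sub_comm, sub_dotProduct, h₁, h₂, sub_self]

theorem ae_hasFDerivAt_lassoFit (hτ : 0 ≤ τ) {βhat : (ι → ℝ) → (κ → ℝ)}
    (hmin : ∀ y β, lassoObjective X D τ y (βhat y) ≤ lassoObjective X D τ y β) :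
    ∀ᵐ y, HasFDerivAt (fun z ↦ X *ᵥ βhat z)
      (dotProjection (fitSpace X D {i | (D *ᵥ βhat y) i = 0})).toContinuousLinearMap y := by
  obtain ⟨K, hK⟩ := exists_lipschitzWith_of_sum_sq_le fun z z' ↦
    lassoFit_sum_sq_sub_le hτ (hmin z) (hmin z')
  let pattern (z : ι → ℝ) (i : ρ) : SignType := SignType.sign ((D *ᵥ βhat z) i)
  filter_upwards [hK.ae_differentiableAt,
    ae_all_iff.2 fun σ ↦ ae_uniqueDiffWithinAt volume {z | pattern z = σ}] with y hdiff huniq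
  set P := (dotProjection (fitSpace X D {i | (D *ᵥ βhat y) i = 0})).toContinuousLinearMap
  have hP : HasFDerivWithinAt (fun z ↦ X *ᵥ βhat z) P {z | pattern z = pattern y} y := by
    refine ((P.hasFDerivAt.sub_const (P y)).const_add (X *ᵥ βhat y)).hasFDerivWithinAt.congr
      (fun z hz ↦ ?_) (by simp)
    have h := dotProjection_fitSpace_sub (hmin y) (hmin z) fun i ↦ (congrFun hz i).symm
    have h' : P (y - z) = X *ᵥ βhat y - X *ᵥ βhat z := h
    change _ = _ + (P z - P y)
    rw [← neg_sub (P y), ← map_sub, h']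
    abel
  exact (huniq _ rfl).eq hdiff.hasFDerivAt.hasFDerivWithinAt hP ▸ hdiff.hasFDerivAt

end Lasso

/-- Generalized Lasso: for almost every `y`, the fitted-value map
`y ↦ X β̂(y)` is differentiable at `y` with divergence `dim(X ker(D₀))`, where `D₀`
consists of the rows `dᵢ` of `D` with `dᵢᵀ β̂(y) = 0`. -/
theorem divergence_generalized_lasso {n d l : ℕ}
    (X : Matrix (Fin n) (Fin d) ℝ) (D : Matrix (Fin l) (Fin d) ℝ)
    (τ : ℝ) (hτ : 0 < τ)
    (βhat : (Fin n → ℝ) → (Fin d → ℝ))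
    (hmin : ∀ y, ∀ β : Fin d → ℝ,
      (1 / 2) * (∑ i, (y i - X.mulVec (βhat y) i) ^ 2) + τ * (∑ i, |D.mulVec (βhat y) i|)
        ≤ (1 / 2) * (∑ i, (y i - X.mulVec β i) ^ 2) + τ * (∑ i, |D.mulVec β i|)) :
    ∀ᵐ y ∂(volume : Measure (Fin n → ℝ)),
      DifferentiableAt ℝ (fun z => X.mulVec (βhat z)) y ∧
      divg (fun z => X.mulVec (βhat z)) y =
        (Module.finrank ℝ
          ↥(Submodule.map X.mulVecLin
            (⨅ i ∈ {i : Fin l | D i ⬝ᵥ βhat y = 0},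
              LinearMap.ker ((LinearMap.proj i : (Fin l → ℝ) →ₗ[ℝ] ℝ).comp D.mulVecLin))) : ℝ) := by
  filter_upwards [ae_hasFDerivAt_lassoFit hτ.le hmin] with y hy
  refine ⟨hy.differentiableAt, ?_⟩
  rw [divg_eq_trace, hy.fderiv]
  exact (isProj_dotProjection _).trace
end

section
/- Let Q = {(ξ,θ) ∈ ℝ^{p+n} : Aξ + Bθ ≤ c} be a nonempty polyhedron and fix λ > 0. For y ∈ ℝⁿ let (θ̂_λ(y), ξ̂_λ(y)) = argmin over (ξ,θ) ∈ Q of (1/2)‖θ − y‖₂² + (λ/2)‖ξ‖₂². Then: (i) the minimizer (θ̂_λ(y), ξ̂_λ(y)) is unique for each y; (ii) for Lebesgue-almost every y ∈ ℝⁿ, θ̂_λ is differentiable at y and its divergence equals D(y) = n − trace( B_{I_y}ᵀ ( B_{I_y} B_{I_y}ᵀ + (1/λ) A_{I_y} A_{I_y}ᵀ )^{-1} B_{I_y} ), where J_y = {1 ≤ i ≤ m : ⟨a_i, ξ̂_λ(y)⟩ + ⟨b_i, θ̂_λ(y)⟩ = c_i}, I_y ⊆ J_y is any index set such that the rows {[a_iᵀ,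 b_iᵀ] : i ∈ I_y} form a maximal linearly independent subset of the rows of [A_{J_y}, B_{J_y}], and the matrix B_{I_y} B_{I_y}ᵀ + (1/λ) A_{I_y} A_{I_y}ᵀ is invertible for any such I_y. -/
open Matrix MeasureTheory

/-!
For a set `I` of constraint rows, imposing those rows as equalities and solving the KKT system
gives a candidate minimiser that is affine in `y`. By the variational inequality, the set of `y`
for which this candidate is the true minimiser is cut out by conditions affine in `y`, hence is
convex, and the frontier of a convex set is Lebesgue-null. Off these finitely many null frontiers,
let `I` index a maximal linearly independent set of active rows at the minimiser for `y`: strict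
convexity of the objective forces the minimiser to be the `I`-candidate, so `y` lies in the
interior of the corresponding region. There `θ̂_λ` is the affine map
`y ↦ (1 - B_Iᵀ M_I⁻¹ B_I) y + const`, with `M_I = B_I B_Iᵀ + λ⁻¹ A_I A_Iᵀ`, whose divergence is
`n - tr (B_Iᵀ M_I⁻¹ B_I)`.
-/

open Filter Topology Set Submodule

noncomputable section

namespace PerturbedProjection

lemma dotProduct_self_nonneg {ι : Type*} [Fintype ι] (v : ι → ℝ) : 0 ≤ v ⬝ᵥ v :=
  Finset.sum_nonneg fun i _ => mul_self_nonneg (v i)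

lemma nonneg_of_eventually_nonneg {a b : ℝ}
    (h : ∀ᶠ t in 𝓝[>] (0 : ℝ), 0 ≤ t * a + t ^ 2 * b) : 0 ≤ a := by
  have hlim : Tendsto (fun t => a + t * b) (𝓝[>] 0) (𝓝 a) := by
    have : Continuous fun t : ℝ => a + t * b := by fun_prop
    simpa using (this.tendsto 0).mono_left nhdsWithin_le_nhds
  refine ge_of_tendsto hlim ?_
  filter_upwards [h, self_mem_nhdsWithin] with t ht (ht0 : 0 < t)
  exact nonneg_of_mul_nonneg_right (by linarith) ht0

lemma eventually_add_smul_le {ι : Type*} [Finite ι] {r v c : ι → ℝ} (hr : r ≤ c)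
    (hv : ∀ i, r i = c i → v i ≤ 0) : ∀ᶠ t in 𝓝[>] (0 : ℝ), r + t • v ≤ c := by
  simp only [Pi.le_def, eventually_all, Pi.add_apply, Pi.smul_apply, smul_eq_mul]
  intro i
  rcases (hr i).eq_or_lt with h | h
  · filter_upwards [self_mem_nhdsWithin] with t (ht : 0 < t)
    nlinarith [hv i h]
  · have : Continuous fun t : ℝ => r i + t * v i := by fun_prop
    have hlim : Tendsto (fun t => r i + t * v i) (𝓝[>] 0) (𝓝 (r i)) := by
      simpa using (this.tendsto 0).mono_left nhdsWithin_le_nhds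
    filter_upwards [hlim.eventually (gt_mem_nhds h)] with t ht using ht.le

lemma append_dotProduct_append {p n : ℕ} (a x : Fin p → ℝ) (b z : Fin n → ℝ) :
    Fin.append a b ⬝ᵥ Fin.append x z = a ⬝ᵥ x + b ⬝ᵥ z := by
  simp [dotProduct, Fin.sum_univ_add]

lemma exists_finset_linearIndependent_span {ι K V : Type*} [Finite ι] [DivisionRing K]
    [AddCommGroup V] [Module K V] (v : ι → V) (J : Set ι) :
    ∃ I : Finset ι, ↑I ⊆ J ∧ LinearIndependent K (fun i : I => v i) ∧
      ∀ j ∈ J, v j ∈ span K (range fun i : I => v i) := by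
  obtain ⟨b, hbJ, -, hspan, hind⟩ :=
    exists_linearIndepOn_extension (linearIndepOn_empty K v) (empty_subset J)
  lift b to Finset ι using b.toFinite
  refine ⟨b, hbJ, hind, fun j hj => ?_⟩
  have := hspan (mem_image_of_mem v hj)
  rwa [image_eq_range] at this

lemma isUnit_mul_transpose_add_smul {p n : ℕ} {ι : Type*} [Fintype ι] [DecidableEq ι]
    (A : Matrix ι (Fin p) ℝ) (B : Matrix ι (Fin n) ℝ) {s : ℝ} (hs : 0 < s)
    (hind : LinearIndependent ℝ fun i => Fin.append (A i) (B i)) :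
    IsUnit (B * Bᵀ + s • (A * Aᵀ)) := by
  rw [isUnit_iff_isUnit_det, isUnit_iff_ne_zero]
  intro hdet
  obtain ⟨v, hv0, hv⟩ := exists_mulVec_eq_zero_iff.2 hdet
  have hquad : (v ᵥ* B) ⬝ᵥ (v ᵥ* B) + s * ((v ᵥ* A) ⬝ᵥ (v ᵥ* A)) = 0 := by
    rw [← dotProduct_zero v, ← hv]
    simp only [add_mulVec, smul_mulVec, ← mulVec_mulVec, dotProduct_add, dotProduct_smul,
      dotProduct_mulVec v, mulVec_transpose, smul_eq_mul]
  have hB := dotProduct_self_nonneg (v ᵥ* B)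
  have hA := dotProduct_self_nonneg (v ᵥ* A)
  have hB0 : v ᵥ* B = 0 := dotProduct_self_eq_zero.1 (by nlinarith)
  have hA0 : v ᵥ* A = 0 := dotProduct_self_eq_zero.1 (by nlinarith)
  refine hv0 (funext (Fintype.linearIndependent_iff.1 hind v ?_))
  ext j
  refine Fin.addCases (fun k => ?_) (fun k => ?_) j
  · simpa [Finset.sum_apply, vecMul, dotProduct, mul_comm] using congrFun hA0 k
  · simpa [Finset.sum_apply, vecMul, dotProduct, mul_comm] using congrFun hB0 k

lemma differentiableAt_and_divg_eq_trace {n : ℕ} {f : (Fin n → ℝ) → Fin n → ℝ} {y : Fin n → ℝ}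
    (L : Matrix (Fin n) (Fin n) ℝ) (v : Fin n → ℝ) (hf : f =ᶠ[𝓝 y] fun y' => L *ᵥ y' + v) :
    DifferentiableAt ℝ f y ∧ divg f y = trace L := by
  have hL : HasFDerivAt (fun y' => L *ᵥ y' + v) (LinearMap.toContinuousLinearMap (mulVecLin L)) y :=
    (LinearMap.toContinuousLinearMap (mulVecLin L)).hasFDerivAt.add_const v
  have hfL := hL.congr_of_eventuallyEq hf
  refine ⟨hfL.differentiableAt, ?_⟩
  simp [divg, hfL.fderiv, trace]

variable {m p n : ℕ}

def objective (lam : ℝ) (y : Fin n → ℝ) (ξ : Fin p → ℝ) (θ : Fin n → ℝ) : ℝ :=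
  (1 / 2) * (∑ j, (θ j - y j) ^ 2) + (lam / 2) * (∑ j, (ξ j) ^ 2)

def objectiveDeriv (lam : ℝ) (y : Fin n → ℝ) (ξ : Fin p → ℝ) (θ : Fin n → ℝ)
    (e : Fin p → ℝ) (f : Fin n → ℝ) : ℝ :=
  lam * (ξ ⬝ᵥ e) + (θ - y) ⬝ᵥ f

def IsMinimizer (A : Matrix (Fin m) (Fin p) ℝ) (B : Matrix (Fin m) (Fin n) ℝ) (c : Fin m → ℝ)
    (lam : ℝ) (y : Fin n → ℝ) (ξ : Fin p → ℝ) (θ : Fin n → ℝ) : Prop :=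
  A *ᵥ ξ + B *ᵥ θ ≤ c ∧
    ∀ ζ η, A *ᵥ ζ + B *ᵥ η ≤ c → objective lam y ξ θ ≤ objective lam y ζ η

def activeSet (A : Matrix (Fin m) (Fin p) ℝ) (B : Matrix (Fin m) (Fin n) ℝ) (c : Fin m → ℝ)
    (ξ : Fin p → ℝ) (θ : Fin n → ℝ) : Set (Fin m) :=
  {i | A i ⬝ᵥ ξ + B i ⬝ᵥ θ = c i}

def restrictRows {k : ℕ} (M : Matrix (Fin m) (Fin k) ℝ) (I : Finset (Fin m)) :
    Matrix I (Fin k) ℝ :=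
  M.submatrix (fun i : I => (i : Fin m)) id

variable {A : Matrix (Fin m) (Fin p) ℝ} {B : Matrix (Fin m) (Fin n) ℝ} {c : Fin m → ℝ}
  {lam : ℝ} {y : Fin n → ℝ} {ξ ξ' e : Fin p → ℝ} {θ θ' f : Fin n → ℝ}

lemma objective_nonneg (hlam : 0 ≤ lam) : 0 ≤ objective lam y ξ θ := by
  unfold objective; positivity

lemma objective_add_smul (t : ℝ) :
    objective lam y (ξ + t • e) (θ + t • f)
      = objective lam y ξ θ + t * objectiveDeriv lam y ξ θ e f + t ^ 2 * objective lam 0 e f := by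
  have expand : ∀ {k : ℕ} (u v : Fin k → ℝ), ∑ j, (u j + t * v j) ^ 2
      = ∑ j, u j ^ 2 + t * (2 * ∑ j, u j * v j) + t ^ 2 * ∑ j, v j ^ 2 := fun u v => by
    simp only [Finset.mul_sum, ← Finset.sum_add_distrib]
    exact Finset.sum_congr rfl fun j _ => by ring
  have hθ := expand (fun j => θ j - y j) f
  have hξ := expand ξ e
  simp only [objective, objectiveDeriv, dotProduct, Pi.add_apply, Pi.sub_apply, Pi.smul_apply,
    Pi.zero_apply, smul_eq_mul, sub_zero, add_sub_right_comm] at hθ hξ ⊢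
  rw [hθ, hξ]
  ring

lemma objectiveDeriv_neg : objectiveDeriv lam y ξ θ (-e) (-f) = -objectiveDeriv lam y ξ θ e f := by
  simp only [objectiveDeriv, dotProduct_neg]; ring

lemma mulVec_add_smul_add_mulVec_add_smul (t : ℝ) :
    A *ᵥ (ξ + t • e) + B *ᵥ (θ + t • f) = (A *ᵥ ξ + B *ᵥ θ) + t • (A *ᵥ e + B *ᵥ f) := by
  simp only [mulVec_add, mulVec_smul, smul_add]; abel

lemma IsMinimizer.objectiveDeriv_nonneg (h : IsMinimizer A B c lam y ξ θ)
    (hdir : ∀ i, (A *ᵥ ξ + B *ᵥ θ) i = c i → (A *ᵥ e + B *ᵥ f) i ≤ 0) :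
    0 ≤ objectiveDeriv lam y ξ θ e f := by
  refine nonneg_of_eventually_nonneg (b := objective lam 0 e f) ?_
  filter_upwards [eventually_add_smul_le h.1 hdir] with t ht
  have := h.2 _ _ (mulVec_add_smul_add_mulVec_add_smul t ▸ ht)
  rw [objective_add_smul] at this
  linarith

lemma isMinimizer_iff (hlam : 0 ≤ lam) :
    IsMinimizer A B c lam y ξ θ ↔ A *ᵥ ξ + B *ᵥ θ ≤ c ∧
      ∀ ζ η, A *ᵥ ζ + B *ᵥ η ≤ c → 0 ≤ objectiveDeriv lam y ξ θ (ζ - ξ) (η - θ) := by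
  refine ⟨fun h => ⟨h.1, fun ζ η hζη => h.objectiveDeriv_nonneg fun i hi => ?_⟩,
    fun ⟨hfeas, hvi⟩ => ⟨hfeas, fun ζ η hζη => ?_⟩⟩
  · have := hζη i
    simp only [mulVec_sub, Pi.add_apply, Pi.sub_apply] at this hi ⊢
    linarith
  · have := objective_add_smul (lam := lam) (y := y) (ξ := ξ) (e := ζ - ξ) (θ := θ) (f := η - θ) 1
    simp only [one_smul, add_sub_cancel, one_mul, one_pow] at this
    linarith [hvi ζ η hζη, objective_nonneg (lam := lam) (y := 0) (ξ := ζ - ξ) (θ := η - θ) hlam]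

lemma eq_of_objectiveDeriv_le (hlam : 0 < lam)
    (h : objectiveDeriv lam y ξ' θ' (ξ' - ξ) (θ' - θ)
      ≤ objectiveDeriv lam y ξ θ (ξ' - ξ) (θ' - θ)) :
    ξ' = ξ ∧ θ' = θ := by
  have hsum : lam * ((ξ' - ξ) ⬝ᵥ (ξ' - ξ)) + (θ' - θ) ⬝ᵥ (θ' - θ) ≤ 0 := by
    simp only [objectiveDeriv, sub_dotProduct] at h ⊢
    linarith
  have hξ := dotProduct_self_nonneg (ξ' - ξ)
  have hθ := dotProduct_self_nonneg (θ' - θ)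
  have hξ0 : (ξ' - ξ) ⬝ᵥ (ξ' - ξ) = 0 := by nlinarith
  have hθ0 : (θ' - θ) ⬝ᵥ (θ' - θ) = 0 := by nlinarith
  exact ⟨sub_eq_zero.1 (dotProduct_self_eq_zero.1 hξ0),
    sub_eq_zero.1 (dotProduct_self_eq_zero.1 hθ0)⟩

lemma IsMinimizer.unique (hlam : 0 < lam) (h : IsMinimizer A B c lam y ξ θ)
    (h' : IsMinimizer A B c lam y ξ' θ') : ξ' = ξ ∧ θ' = θ := by
  have hfwd := ((isMinimizer_iff hlam.le).1 h).2 ξ' θ' h'.1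
  have hbwd := ((isMinimizer_iff hlam.le).1 h').2 ξ θ h.1
  rw [← neg_sub ξ', ← neg_sub θ', objectiveDeriv_neg] at hbwd
  exact eq_of_objectiveDeriv_le hlam (by linarith)

variable (A B c lam) (I : Finset (Fin m))

def gram : Matrix I I ℝ :=
  restrictRows B I * (restrictRows B I)ᵀ + (1 / lam) • (restrictRows A I * (restrictRows A I)ᵀ)

-- With the rows in `I` imposed as equalities, the KKT conditions `λ ξ = -A_Iᵀ u`,
-- `θ - y = -B_Iᵀ u`, `A_I ξ + B_I θ = c_I` give `u = (gram A B lam I)⁻¹ (B_I y - c_I)`.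
def multiplier (y : Fin n → ℝ) : I → ℝ :=
  (gram A B lam I)⁻¹ *ᵥ (restrictRows B I *ᵥ y - fun i : I => c i)

def candXi (y : Fin n → ℝ) : Fin p → ℝ :=
  (-lam⁻¹) • ((restrictRows A I)ᵀ *ᵥ multiplier A B c lam I y)

def candTheta (y : Fin n → ℝ) : Fin n → ℝ :=
  y - (restrictRows B I)ᵀ *ᵥ multiplier A B c lam I y

def optimalityRegion : Set (Fin n → ℝ) :=
  {y | IsMinimizer A B c lam y (candXi A B c lam I y) (candTheta A B c lam I y)}

variable {A B c lam I}

lemma gram_mulVec_multiplier (hM : IsUnit (gram A B lam I)) (y : Fin n → ℝ) :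
    gram A B lam I *ᵥ multiplier A B c lam I y = restrictRows B I *ᵥ y - fun i : I => c i := by
  rw [multiplier, mulVec_mulVec, mul_nonsing_inv _ ((isUnit_iff_isUnit_det _).1 hM), one_mulVec]

lemma rows_candidate (hM : IsUnit (gram A B lam I)) (y : Fin n → ℝ) :
    restrictRows A I *ᵥ candXi A B c lam I y + restrictRows B I *ᵥ candTheta A B c lam I y
      = fun i : I => c i := by
  have h := gram_mulVec_multiplier (c := c) hM y
  simp only [gram, add_mulVec, smul_mulVec, ← mulVec_mulVec, one_div] at h
  simp only [candXi, candTheta, neg_smul, mulVec_neg, mulVec_smul, mulVec_sub]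
  linear_combination (norm := module) -h

lemma objectiveDeriv_candidate (hlam : lam ≠ 0) (y : Fin n → ℝ) (e : Fin p → ℝ) (f : Fin n → ℝ) :
    objectiveDeriv lam y (candXi A B c lam I y) (candTheta A B c lam I y) e f
      = -(multiplier A B c lam I y ⬝ᵥ (restrictRows A I *ᵥ e + restrictRows B I *ᵥ f)) := by
  simp only [objectiveDeriv, candXi, candTheta, sub_sub_cancel_left, smul_dotProduct,
    neg_dotProduct, dotProduct_add, mulVec_transpose, dotProduct_mulVec, smul_eq_mul]
  field_simp
  ring

lemma objectiveDeriv_candidate_sub (hlam : lam ≠ 0) (hM : IsUnit (gram A B lam I))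
    (y : Fin n → ℝ) (ζ : Fin p → ℝ) (η : Fin n → ℝ) :
    objectiveDeriv lam y (candXi A B c lam I y) (candTheta A B c lam I y)
        (ζ - candXi A B c lam I y) (η - candTheta A B c lam I y)
      = multiplier A B c lam I y ⬝ᵥ
          ((fun i : I => c i) - (restrictRows A I *ᵥ ζ + restrictRows B I *ᵥ η)) := by
  rw [objectiveDeriv_candidate hlam, mulVec_sub, mulVec_sub, sub_add_sub_comm, rows_candidate hM,
    ← dotProduct_neg, neg_sub]

-- For fixed `(ζ, η)` each condition on the right is affine in `y`.
lemma optimalityRegion_eq (hlam : 0 < lam) (hM : IsUnit (gram A B lam I)) :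
    optimalityRegion A B c lam I =
      {y | A *ᵥ candXi A B c lam I y + B *ᵥ candTheta A B c lam I y ≤ c ∧
        ∀ ζ η, A *ᵥ ζ + B *ᵥ η ≤ c → 0 ≤ multiplier A B c lam I y ⬝ᵥ
          ((fun i : I => c i) - (restrictRows A I *ᵥ ζ + restrictRows B I *ᵥ η))} := by
  ext y
  simp only [optimalityRegion, mem_ofPred_eq, isMinimizer_iff hlam.le,
    objectiveDeriv_candidate_sub hlam.ne' hM]

section Combination

variable {a b : ℝ} (hab : a + b = 1) (y₀ y₁ : Fin n → ℝ)
include hab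

lemma multiplier_combo :
    multiplier A B c lam I (a • y₀ + b • y₁)
      = a • multiplier A B c lam I y₀ + b • multiplier A B c lam I y₁ := by
  simp only [multiplier, ← mulVec_smul, ← mulVec_add]
  congr 1
  rw [mulVec_add, mulVec_smul, mulVec_smul]
  linear_combination (norm := module) hab • (fun i : I => c i)

lemma candXi_combo :
    candXi A B c lam I (a • y₀ + b • y₁)
      = a • candXi A B c lam I y₀ + b • candXi A B c lam I y₁ := by
  simp only [candXi, multiplier_combo hab, mulVec_add, mulVec_smul]
  module

lemma candTheta_combo :
    candTheta A B c lam I (a • y₀ + b • y₁)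
      = a • candTheta A B c lam I y₀ + b • candTheta A B c lam I y₁ := by
  simp only [candTheta, multiplier_combo hab, mulVec_add, mulVec_smul]
  module

end Combination

lemma convex_optimalityRegion (hlam : 0 < lam) (hM : IsUnit (gram A B lam I)) :
    Convex ℝ (optimalityRegion A B c lam I) := by
  rw [optimalityRegion_eq hlam hM]
  rintro y₀ ⟨hfeas₀, hmul₀⟩ y₁ ⟨hfeas₁, hmul₁⟩ a b ha hb hab
  refine ⟨?_, fun ζ η hζη => ?_⟩
  · refine Eq.trans_le ?_ (convex_Iic c hfeas₀ hfeas₁ ha hb hab)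
    rw [candXi_combo hab, candTheta_combo hab]
    simp only [mulVec_add, mulVec_smul]
    module
  · rw [multiplier_combo hab, add_dotProduct, smul_dotProduct, smul_dotProduct]
    exact add_nonneg (smul_nonneg ha (hmul₀ ζ η hζη)) (smul_nonneg hb (hmul₁ ζ η hζη))

lemma candTheta_eq_mulVec_add (y : Fin n → ℝ) :
    candTheta A B c lam I y
      = (1 - (restrictRows B I)ᵀ * (gram A B lam I)⁻¹ * restrictRows B I) *ᵥ y
        + (restrictRows B I)ᵀ *ᵥ ((gram A B lam I)⁻¹ *ᵥ fun i : I => c i) := by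
  simp only [candTheta, multiplier, sub_mulVec, one_mulVec, mulVec_sub, ← mulVec_mulVec]
  abel

lemma ae_notMem_frontier_optimalityRegion (hlam : 0 < lam) :
    ∀ᵐ y ∂(volume : Measure (Fin n → ℝ)), ∀ I : Finset (Fin m),
      IsUnit (gram A B lam I) → y ∉ frontier (optimalityRegion A B c lam I) := by
  refine ae_all_iff.2 fun I => ?_
  by_cases hM : IsUnit (gram A B lam I)
  · filter_upwards [measure_eq_zero_iff_ae_notMem.1
      ((convex_optimalityRegion hlam hM).addHaar_frontier volume)] with y hy _ using hy
  · exact .of_forall fun _ h => absurd h hM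

lemma eventuallyEq_candTheta (hlam : 0 < lam) {ξhat : (Fin n → ℝ) → Fin p → ℝ}
    {θhat : (Fin n → ℝ) → Fin n → ℝ} (hmin : ∀ y, IsMinimizer A B c lam y (ξhat y) (θhat y))
    (hy : y ∈ interior (optimalityRegion A B c lam I)) :
    θhat =ᶠ[𝓝 y] candTheta A B c lam I := by
  filter_upwards [isOpen_interior.mem_nhds hy] with y' hy'
  exact (IsMinimizer.unique hlam (interior_subset hy' :) (hmin y')).2

lemma mulVec_add_mulVec_eq_zero_of_mem_span {j : Fin m}
    (hj : Fin.append (A j) (B j) ∈ span ℝ (range fun i : I => Fin.append (A i.1) (B i.1)))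
    (hker : restrictRows A I *ᵥ e + restrictRows B I *ᵥ f = 0) :
    (A *ᵥ e + B *ᵥ f) j = 0 := by
  have key : ∀ v ∈ span ℝ (range fun i : I => Fin.append (A i.1) (B i.1)),
      v ⬝ᵥ Fin.append e f = 0 := by
    intro v hv
    induction hv using Submodule.span_induction with
    | mem _ hv =>
      obtain ⟨i, rfl⟩ := hv
      rw [append_dotProduct_append]
      exact congrFun hker i
    | zero => exact zero_dotProduct _
    | add _ _ _ _ h₁ h₂ => rw [add_dotProduct, h₁, h₂, add_zero]
    | smul a _ _ h => rw [smul_dotProduct, h, smul_zero]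
  exact (append_dotProduct_append _ _ _ _).symm.trans (key _ hj)

lemma candidate_eq_of_isMinimizer (hlam : 0 < lam) (hM : IsUnit (gram A B lam I))
    (hmin : IsMinimizer A B c lam y ξ θ) (hI : ↑I ⊆ activeSet A B c ξ θ)
    (hspan : ∀ j ∈ activeSet A B c ξ θ,
      Fin.append (A j) (B j) ∈ span ℝ (range fun i : I => Fin.append (A i.1) (B i.1))) :
    candXi A B c lam I y = ξ ∧ candTheta A B c lam I y = θ := by
  set e := candXi A B c lam I y - ξ
  set f := candTheta A B c lam I y - θ
  -- `(e, f)` is in the kernel of all active rows, so `±(e, f)` are feasible directions at the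
  -- minimiser; the derivative vanishes along `(e, f)` there and at the candidate.
  have hker : restrictRows A I *ᵥ e + restrictRows B I *ᵥ f = 0 := by
    rw [mulVec_sub, mulVec_sub, sub_add_sub_comm, rows_candidate hM, sub_eq_zero]
    exact funext fun i => (hI i.2).symm
  have hact : ∀ j ∈ activeSet A B c ξ θ, (A *ᵥ e + B *ᵥ f) j = 0 :=
    fun j hj => mulVec_add_mulVec_eq_zero_of_mem_span (hspan j hj) hker
  have hfwd : 0 ≤ objectiveDeriv lam y ξ θ e f :=
    hmin.objectiveDeriv_nonneg fun j hj => (hact j hj).le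
  have hbwd : 0 ≤ objectiveDeriv lam y ξ θ (-e) (-f) := hmin.objectiveDeriv_nonneg fun j hj => by
    rw [mulVec_neg, mulVec_neg, ← neg_add, Pi.neg_apply, hact j hj, neg_zero]
  have hcand : objectiveDeriv lam y (candXi A B c lam I y) (candTheta A B c lam I y) e f = 0 := by
    rw [objectiveDeriv_candidate hlam.ne', hker, dotProduct_zero, neg_zero]
  rw [objectiveDeriv_neg] at hbwd
  exact eq_of_objectiveDeriv_le hlam (by linarith)

lemma isUnit_gram (hlam : 0 < lam)
    (hind : LinearIndependent ℝ (fun i : I => Fin.append (A i.1) (B i.1))) :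
    IsUnit (gram A B lam I) :=
  isUnit_mul_transpose_add_smul _ _ (one_div_pos.2 hlam) hind

lemma differentiableAt_and_divg_eq (hlam : 0 < lam) {ξhat : (Fin n → ℝ) → Fin p → ℝ}
    {θhat : (Fin n → ℝ) → Fin n → ℝ} (hmin : ∀ y, IsMinimizer A B c lam y (ξhat y) (θhat y))
    (hy : y ∉ frontier (optimalityRegion A B c lam I))
    (hI : ↑I ⊆ activeSet A B c (ξhat y) (θhat y))
    (hind : LinearIndependent ℝ (fun i : I => Fin.append (A i.1) (B i.1)))
    (hspan : ∀ j ∈ activeSet A B c (ξhat y) (θhat y),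
      Fin.append (A j) (B j) ∈ span ℝ (range fun i : I => Fin.append (A i.1) (B i.1))) :
    DifferentiableAt ℝ θhat y ∧ divg θhat y
      = n - trace ((restrictRows B I)ᵀ * (gram A B lam I)⁻¹ * restrictRows B I) := by
  have hM := isUnit_gram hlam hind
  obtain ⟨hξ, hθ⟩ := candidate_eq_of_isMinimizer hlam hM (hmin y) hI hspan
  have hmem : y ∈ optimalityRegion A B c lam I := by
    rw [optimalityRegion, mem_ofPred_eq, hξ, hθ]
    exact hmin y
  have hint : y ∈ interior (optimalityRegion A B c lam I) :=
    self_sdiff_frontier (optimalityRegion A B c lam I) ▸ ⟨hmem, hy⟩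
  have hloc := eventuallyEq_candTheta hlam hmin hint
  rw [funext candTheta_eq_mulVec_add] at hloc
  obtain ⟨hdiff, hdivg⟩ := differentiableAt_and_divg_eq_trace _ _ hloc
  exact ⟨hdiff, by rw [hdivg, trace_sub, trace_one, Fintype.card_fin]⟩

end PerturbedProjection

end

open PerturbedProjection

theorem divergence_quadratically_perturbed_projection_general {m p n : ℕ}
    (A : Matrix (Fin m) (Fin p) ℝ) (B : Matrix (Fin m) (Fin n) ℝ)
    (c : Fin m → ℝ) (lam : ℝ) (hlam : 0 < lam)
    (θhat : (Fin n → ℝ) → (Fin n → ℝ)) (ξhat : (Fin n → ℝ) → (Fin p → ℝ))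
    (hmin : ∀ y, A.mulVec (ξhat y) + B.mulVec (θhat y) ≤ c ∧
      ∀ ξ θ, A.mulVec ξ + B.mulVec θ ≤ c →
        (1 / 2) * (∑ j, (θhat y j - y j) ^ 2) + (lam / 2) * (∑ j, (ξhat y j) ^ 2)
          ≤ (1 / 2) * (∑ j, (θ j - y j) ^ 2) + (lam / 2) * (∑ j, (ξ j) ^ 2)) :
    (∀ y, ∀ ξ' : Fin p → ℝ, ∀ θ' : Fin n → ℝ,
      (A.mulVec ξ' + B.mulVec θ' ≤ c ∧
        ∀ ξ θ, A.mulVec ξ + B.mulVec θ ≤ c →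
          (1 / 2) * (∑ j, (θ' j - y j) ^ 2) + (lam / 2) * (∑ j, (ξ' j) ^ 2)
            ≤ (1 / 2) * (∑ j, (θ j - y j) ^ 2) + (lam / 2) * (∑ j, (ξ j) ^ 2)) →
      θ' = θhat y ∧ ξ' = ξhat y) ∧
    (∀ᵐ y ∂(volume : Measure (Fin n → ℝ)), DifferentiableAt ℝ θhat y ∧
      ∀ I : Finset (Fin m),
        (↑I : Set (Fin m)) ⊆ {i | A i ⬝ᵥ ξhat y + B i ⬝ᵥ θhat y = c i} →
        LinearIndependent ℝ (fun i : I => Fin.append (A i.1) (B i.1)) →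
        (∀ j ∈ {i : Fin m | A i ⬝ᵥ ξhat y + B i ⬝ᵥ θhat y = c i},
          Fin.append (A j) (B j) ∈
            Submodule.span ℝ (Set.range (fun i : I => Fin.append (A i.1) (B i.1)))) →
        IsUnit (B.submatrix (fun i : I => (i : Fin m)) id
              * (B.submatrix (fun i : I => (i : Fin m)) id)ᵀ
            + (1 / lam) • (A.submatrix (fun i : I => (i : Fin m)) id
              * (A.submatrix (fun i : I => (i : Fin m)) id)ᵀ)) ∧
        divg θhat y = (n : ℝ) - Matrix.trace
          ((B.submatrix (fun i : I => (i : Fin m)) id)ᵀ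
            * (B.submatrix (fun i : I => (i : Fin m)) id
                * (B.submatrix (fun i : I => (i : Fin m)) id)ᵀ
              + (1 / lam) • (A.submatrix (fun i : I => (i : Fin m)) id
                * (A.submatrix (fun i : I => (i : Fin m)) id)ᵀ))⁻¹
            * B.submatrix (fun i : I => (i : Fin m)) id)) := by
  have hmin : ∀ y, IsMinimizer A B c lam y (ξhat y) (θhat y) := hmin
  refine ⟨fun y ξ' θ' h' => (IsMinimizer.unique hlam (hmin y) h').symm, ?_⟩
  filter_upwards [ae_notMem_frontier_optimalityRegion (c := c) hlam] with y hy
  obtain ⟨I, hI, hind, hspan⟩ := exists_finset_linearIndependent_span (K := ℝ)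
    (fun i => Fin.append (A i) (B i)) (activeSet A B c (ξhat y) (θhat y))
  have hlocal := fun I hI hind hspan =>
    differentiableAt_and_divg_eq hlam hmin (hy I (isUnit_gram hlam hind)) hI hind hspan
  exact ⟨(hlocal I hI hind hspan).1,
    fun I hI hind hspan => ⟨isUnit_gram hlam hind, (hlocal I hI hind hspan).2⟩⟩

/-- Quadratically perturbed projection onto the polyhedron
`Q = {(ξ,θ) : Aξ + Bθ ≤ c}`, with objective `(1/2)‖θ − y‖₂² + (λ/2)‖ξ‖₂²`, `λ > 0`:
(i) the minimizer is unique; (ii) for almost every `y`, `θ̂_λ` is differentiable at `y`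
and, for any `I_y ⊆ J_y` indexing a maximal linearly independent subset of the binding
rows `[a_iᵀ, b_iᵀ]`, the matrix `B_{I_y} B_{I_y}ᵀ + (1/λ) A_{I_y} A_{I_y}ᵀ` is
invertible and the divergence equals
`n − trace(B_{I_y}ᵀ (B_{I_y} B_{I_y}ᵀ + (1/λ) A_{I_y} A_{I_y}ᵀ)⁻¹ B_{I_y})`. -/
theorem divergence_quadratically_perturbed_projection {m p n : ℕ}
    (A : Matrix (Fin m) (Fin p) ℝ) (B : Matrix (Fin m) (Fin n) ℝ)
    (c : Fin m → ℝ) (lam : ℝ) (hlam : 0 < lam)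
    (hQ : ∃ ξ : Fin p → ℝ, ∃ θ : Fin n → ℝ, A.mulVec ξ + B.mulVec θ ≤ c)
    (θhat : (Fin n → ℝ) → (Fin n → ℝ)) (ξhat : (Fin n → ℝ) → (Fin p → ℝ))
    (hmin : ∀ y, A.mulVec (ξhat y) + B.mulVec (θhat y) ≤ c ∧
      ∀ ξ θ, A.mulVec ξ + B.mulVec θ ≤ c →
        (1 / 2) * (∑ j, (θhat y j - y j) ^ 2) + (lam / 2) * (∑ j, (ξhat y j) ^ 2)
          ≤ (1 / 2) * (∑ j, (θ j - y j) ^ 2) + (lam / 2) * (∑ j, (ξ j) ^ 2)) :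
    (∀ y, ∀ ξ' : Fin p → ℝ, ∀ θ' : Fin n → ℝ,
      (A.mulVec ξ' + B.mulVec θ' ≤ c ∧
        ∀ ξ θ, A.mulVec ξ + B.mulVec θ ≤ c →
          (1 / 2) * (∑ j, (θ' j - y j) ^ 2) + (lam / 2) * (∑ j, (ξ' j) ^ 2)
            ≤ (1 / 2) * (∑ j, (θ j - y j) ^ 2) + (lam / 2) * (∑ j, (ξ j) ^ 2)) →
      θ' = θhat y ∧ ξ' = ξhat y) ∧
    (∀ᵐ y ∂(volume : Measure (Fin n → ℝ)), DifferentiableAt ℝ θhat y ∧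
      ∀ I : Finset (Fin m),
        (↑I : Set (Fin m)) ⊆ {i | A i ⬝ᵥ ξhat y + B i ⬝ᵥ θhat y = c i} →
        LinearIndependent ℝ (fun i : I => Fin.append (A i.1) (B i.1)) →
        (∀ j ∈ {i : Fin m | A i ⬝ᵥ ξhat y + B i ⬝ᵥ θhat y = c i},
          Fin.append (A j) (B j) ∈
            Submodule.span ℝ (Set.range (fun i : I => Fin.append (A i.1) (B i.1)))) →
        IsUnit (B.submatrix (fun i : I => (i : Fin m)) id
              * (B.submatrix (fun i : I => (i : Fin m)) id)ᵀ
            + (1 / lam) • (A.submatrix (fun i : I => (i : Fin m)) id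
              * (A.submatrix (fun i : I => (i : Fin m)) id)ᵀ)) ∧
        divg θhat y = (n : ℝ) - Matrix.trace
          ((B.submatrix (fun i : I => (i : Fin m)) id)ᵀ
            * (B.submatrix (fun i : I => (i : Fin m)) id
                * (B.submatrix (fun i : I => (i : Fin m)) id)ᵀ
              + (1 / lam) • (A.submatrix (fun i : I => (i : Fin m)) id
                * (A.submatrix (fun i : I => (i : Fin m)) id)ᵀ))⁻¹
            * B.submatrix (fun i : I => (i : Fin m)) id)) :=
  divergence_quadratically_perturbed_projection_general A B c lam hlam θhat ξhat hmin
end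

section
/- Let Q = {(ξ,θ) ∈ ℝ^{p+n} : Aξ + Bθ ≤ c} be a nonempty polyhedron and fix λ > 0. For z ∈ ℝⁿ let (θ̂_λ(z), ξ̂_λ(z)) be the unique minimizer of (1/2)‖θ − z‖₂² + (λ/2)‖ξ‖₂² over Q. Then for Lebesgue-almost every y ∈ ℝⁿ, with J_y = {1 ≤ i ≤ m : ⟨a_i, ξ̂_λ(y)⟩ + ⟨b_i, θ̂_λ(y)⟩ = c_i}, there is an open neighborhood U of y such that for every z ∈ U, θ̂_λ(z) equals the θ-component θ̃_λ(z) of the unique minimizer of (1/2)‖θ − z‖₂² + (λ/2)‖ξ‖₂² over the affine set {(ξ,θ) ∈ ℝ^{p+n} : A_{J_y} ξ + B_{J_y} θ = c_{J_y}}. -/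
open Matrix MeasureTheory Filter Topology

namespace St16

variable {p n : ℕ}

/-- weighted inner product on `ℝ^p × ℝ^n`. -/
noncomputable def ip (lam : ℝ) (x y : (Fin p → ℝ) × (Fin n → ℝ)) : ℝ :=
  lam * (x.1 ⬝ᵥ y.1) + x.2 ⬝ᵥ y.2

lemma ip_symm (lam : ℝ) (x y : (Fin p → ℝ) × (Fin n → ℝ)) : ip lam x y = ip lam y x := by
  simp [ip, dotProduct_comm]

lemma ip_add_left (lam : ℝ) (x y z : (Fin p → ℝ) × (Fin n → ℝ)) :
    ip lam (x + y) z = ip lam x z + ip lam y z := by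
  simp only [ip, Prod.fst_add, Prod.snd_add, add_dotProduct]; ring

lemma ip_add_right (lam : ℝ) (x y z : (Fin p → ℝ) × (Fin n → ℝ)) :
    ip lam x (y + z) = ip lam x y + ip lam x z := by
  rw [ip_symm, ip_add_left, ip_symm lam y x, ip_symm lam z x]

lemma ip_smul_left (lam r : ℝ) (x z : (Fin p → ℝ) × (Fin n → ℝ)) :
    ip lam (r • x) z = r * ip lam x z := by
  simp only [ip, Prod.smul_fst, Prod.smul_snd, smul_dotProduct, smul_eq_mul]; ring

lemma ip_smul_right (lam r : ℝ) (x z : (Fin p → ℝ) × (Fin n → ℝ)) :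
    ip lam x (r • z) = r * ip lam x z := by
  rw [ip_symm, ip_smul_left, ip_symm]

lemma ip_neg_left (lam : ℝ) (x z : (Fin p → ℝ) × (Fin n → ℝ)) :
    ip lam (-x) z = -ip lam x z := by
  have := ip_smul_left lam (-1) x z; simpa using this

lemma ip_sub_left (lam : ℝ) (x y z : (Fin p → ℝ) × (Fin n → ℝ)) :
    ip lam (x - y) z = ip lam x z - ip lam y z := by
  rw [sub_eq_add_neg, ip_add_left, ip_neg_left, sub_eq_add_neg]

lemma ip_sub_right (lam : ℝ) (x y z : (Fin p → ℝ) × (Fin n → ℝ)) :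
    ip lam x (y - z) = ip lam x y - ip lam x z := by
  rw [ip_symm, ip_sub_left, ip_symm lam y x, ip_symm lam z x]

lemma ip_self_nonneg {lam : ℝ} (hlam : 0 ≤ lam) (x : (Fin p → ℝ) × (Fin n → ℝ)) :
    0 ≤ ip lam x x := by
  have h1 : (0:ℝ) ≤ x.1 ⬝ᵥ x.1 := Finset.sum_nonneg fun i _ => mul_self_nonneg _
  have h2 : (0:ℝ) ≤ x.2 ⬝ᵥ x.2 := Finset.sum_nonneg fun i _ => mul_self_nonneg _
  have := mul_nonneg hlam h1
  unfold ip; linarith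

lemma eq_zero_of_ip_self_nonpos {lam : ℝ} (hlam : 0 < lam)
    {x : (Fin p → ℝ) × (Fin n → ℝ)} (h : ip lam x x ≤ 0) : x = 0 := by
  have h1 : (0:ℝ) ≤ x.1 ⬝ᵥ x.1 := Finset.sum_nonneg fun i _ => mul_self_nonneg _
  have h2 : (0:ℝ) ≤ x.2 ⬝ᵥ x.2 := Finset.sum_nonneg fun i _ => mul_self_nonneg _
  have hip : lam * (x.1 ⬝ᵥ x.1) + x.2 ⬝ᵥ x.2 ≤ 0 := h
  have e1 : x.1 ⬝ᵥ x.1 = 0 := by nlinarith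
  have e2 : x.2 ⬝ᵥ x.2 = 0 := by nlinarith
  have f1 : ∀ j, x.1 j = 0 := by
    intro j
    have := (Finset.sum_eq_zero_iff_of_nonneg (fun i _ => mul_self_nonneg (x.1 i))).1 e1 j
      (Finset.mem_univ j)
    exact mul_self_eq_zero.mp this
  have f2 : ∀ j, x.2 j = 0 := by
    intro j
    have := (Finset.sum_eq_zero_iff_of_nonneg (fun i _ => mul_self_nonneg (x.2 i))).1 e2 j
      (Finset.mem_univ j)
    exact mul_self_eq_zero.mp this
  ext j
  · exact f1 j
  · exact f2 j

/-- the objective as squared `ip`-distance from `(0,z)`. -/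
noncomputable def objS (lam : ℝ) (z : Fin n → ℝ) (x : (Fin p → ℝ) × (Fin n → ℝ)) : ℝ :=
  (1/2) * ip lam (x - (0, z)) (x - (0, z))

lemma objS_eq (lam : ℝ) (z : Fin n → ℝ) (ξ : Fin p → ℝ) (θ : Fin n → ℝ) :
    objS lam z (ξ, θ) =
      (1/2) * (∑ j, (θ j - z j) ^ 2) + (lam/2) * (∑ j, (ξ j) ^ 2) := by
  simp only [objS, ip, Prod.mk_sub_mk, dotProduct, Pi.sub_apply, Pi.zero_apply, sub_zero,
    pow_two]
  ring

lemma objS_expand (lam : ℝ) (z : Fin n → ℝ) (x y : (Fin p → ℝ) × (Fin n → ℝ)) :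
    objS lam z x = objS lam z y + ip lam (y - (0, z)) (x - y)
      + (1/2) * ip lam (x - y) (x - y) := by
  have h : x - (0, z) = (y - (0, z)) + (x - y) := by abel
  rw [objS, objS, h, ip_add_left, ip_add_right, ip_add_right]
  have := ip_symm lam (y - (0, z)) (x - y)
  linarith

lemma objS_midpoint (lam : ℝ) (z : Fin n → ℝ) (x y : (Fin p → ℝ) × (Fin n → ℝ)) :
    objS lam z ((1/2 : ℝ) • x + (1/2 : ℝ) • y) =
      (1/2) * objS lam z x + (1/2) * objS lam z y - (1/8) * ip lam (x - y) (x - y) := by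
  have h : (1/2 : ℝ) • x + (1/2 : ℝ) • y - (0, z)
      = (1/2 : ℝ) • (x - (0, z)) + (1/2 : ℝ) • (y - (0, z)) := by
    module
  have h2 : x - y = (x - (0, z)) - (y - (0, z)) := by abel
  rw [objS, objS, objS, h, h2]
  simp only [ip_add_left, ip_add_right, ip_sub_left, ip_sub_right, ip_smul_left, ip_smul_right]
  have := ip_symm lam (x - (0, z)) (y - (0, z))
  linarith

end St16

open Filter Topology

theorem local_affine_equivalence_quadratically_perturbed {m p n : ℕ}
    (A : Matrix (Fin m) (Fin p) ℝ) (B : Matrix (Fin m) (Fin n) ℝ)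
    (c : Fin m → ℝ) (lam : ℝ) (hlam : 0 < lam)
    (hQ : ∃ ξ : Fin p → ℝ, ∃ θ : Fin n → ℝ, A.mulVec ξ + B.mulVec θ ≤ c)
    (θhat : (Fin n → ℝ) → (Fin n → ℝ)) (ξhat : (Fin n → ℝ) → (Fin p → ℝ))
    (hmin : ∀ z, A.mulVec (ξhat z) + B.mulVec (θhat z) ≤ c ∧
      ∀ ξ θ, A.mulVec ξ + B.mulVec θ ≤ c →
        (1 / 2) * (∑ j, (θhat z j - z j) ^ 2) + (lam / 2) * (∑ j, (ξhat z j) ^ 2)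
          ≤ (1 / 2) * (∑ j, (θ j - z j) ^ 2) + (lam / 2) * (∑ j, (ξ j) ^ 2)) :
    ∀ᵐ y ∂(volume : Measure (Fin n → ℝ)),
      ∃ U : Set (Fin n → ℝ), IsOpen U ∧ y ∈ U ∧
        ∀ z ∈ U, ∃ ξt : Fin p → ℝ,
          (∀ i ∈ {i : Fin m | A i ⬝ᵥ ξhat y + B i ⬝ᵥ θhat y = c i},
            A i ⬝ᵥ ξt + B i ⬝ᵥ θhat z = c i) ∧
          ∀ ξ θ, (∀ i ∈ {i : Fin m | A i ⬝ᵥ ξhat y + B i ⬝ᵥ θhat y = c i},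
              A i ⬝ᵥ ξ + B i ⬝ᵥ θ = c i) →
            (1 / 2) * (∑ j, (θhat z j - z j) ^ 2) + (lam / 2) * (∑ j, (ξt j) ^ 2)
              ≤ (1 / 2) * (∑ j, (θ j - z j) ^ 2) + (lam / 2) * (∑ j, (ξ j) ^ 2) := by
  classical
  let Pt : (Fin n → ℝ) → (Fin p → ℝ) × (Fin n → ℝ) := fun z => (ξhat z, θhat z)
  -- feasibility of the minimizer
  have hfeaP : ∀ z i, A i ⬝ᵥ (Pt z).1 + B i ⬝ᵥ (Pt z).2 ≤ c i := by
    intro z i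
    have h := (hmin z).1 i
    simpa [Matrix.mulVec] using h
  -- optimality of the minimizer in `objS` form
  have hminP : ∀ z (x : (Fin p → ℝ) × (Fin n → ℝ)),
      (∀ i, A i ⬝ᵥ x.1 + B i ⬝ᵥ x.2 ≤ c i) →
      St16.objS lam z (Pt z) ≤ St16.objS lam z x := by
    intro z x hx
    have hfe : A.mulVec x.1 + B.mulVec x.2 ≤ c := by
      intro i; simpa [Matrix.mulVec] using hx i
    have h := (hmin z).2 x.1 x.2 hfe
    have e1 : St16.objS lam z (Pt z)
        = (1/2) * (∑ j, (θhat z j - z j) ^ 2) + (lam/2) * (∑ j, (ξhat z j) ^ 2) :=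
      St16.objS_eq lam z (ξhat z) (θhat z)
    have e2 : St16.objS lam z x
        = (1/2) * (∑ j, (x.2 j - z j) ^ 2) + (lam/2) * (∑ j, (x.1 j) ^ 2) :=
      St16.objS_eq lam z x.1 x.2
    rw [e1, e2]
    convert h using 2 <;> norm_num
  -- variational inequality
  have hVI : ∀ z (x : (Fin p → ℝ) × (Fin n → ℝ)),
      (∀ i, A i ⬝ᵥ x.1 + B i ⬝ᵥ x.2 ≤ c i) →
      St16.ip lam ((0, z) - Pt z) (x - Pt z) ≤ 0 := by
    intro z x hx
    have key : ∀ t : ℝ, 0 < t → t ≤ 1 →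
        0 ≤ t * St16.ip lam (Pt z - (0, z)) (x - Pt z)
          + t ^ 2 * (1/2) * St16.ip lam (x - Pt z) (x - Pt z) := by
      intro t ht0 ht1
      have hfe : ∀ i, A i ⬝ᵥ (Pt z + t • (x - Pt z)).1
          + B i ⬝ᵥ (Pt z + t • (x - Pt z)).2 ≤ c i := by
        intro i
        have h1 := hfeaP z i
        have h2 := hx i
        have e : A i ⬝ᵥ (Pt z + t • (x - Pt z)).1 + B i ⬝ᵥ (Pt z + t • (x - Pt z)).2
            = (1 - t) * (A i ⬝ᵥ (Pt z).1 + B i ⬝ᵥ (Pt z).2)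
              + t * (A i ⬝ᵥ x.1 + B i ⬝ᵥ x.2) := by
          simp only [Prod.fst_add, Prod.snd_add, Prod.smul_fst, Prod.smul_snd,
            Prod.fst_sub, Prod.snd_sub, dotProduct_add, dotProduct_smul, dotProduct_sub,
            smul_eq_mul]
          ring
        rw [e]; nlinarith
      have hob := hminP z (Pt z + t • (x - Pt z)) hfe
      have hexp := St16.objS_expand lam z (Pt z + t • (x - Pt z)) (Pt z)
      have h3 : Pt z + t • (x - Pt z) - Pt z = t • (x - Pt z) := by abel
      rw [h3] at hexp
      simp only [St16.ip_smul_left, St16.ip_smul_right] at hexp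
      nlinarith [hob, hexp]
    set a := St16.ip lam (Pt z - (0, z)) (x - Pt z) with ha
    set s := St16.ip lam (x - Pt z) (x - Pt z) with hs
    have hs0 : 0 ≤ s := St16.ip_self_nonneg hlam.le _
    have ha0 : 0 ≤ a := by
      by_contra hna
      push_neg at hna
      have hsp : (0:ℝ) < s + 1 := by linarith
      have ht0 : 0 < min 1 (-a / (s + 1)) :=
        lt_min one_pos (div_pos (by linarith) hsp)
      have ht1 : min 1 (-a / (s + 1)) ≤ 1 := min_le_left _ _
      have ht2 : min 1 (-a / (s + 1)) * (s + 1) ≤ -a := by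
        have h := min_le_right 1 (-a / (s + 1))
        calc min 1 (-a / (s + 1)) * (s + 1) ≤ (-a / (s + 1)) * (s + 1) := by nlinarith
          _ = -a := by field_simp
      have hk := key _ ht0 ht1
      nlinarith
    have hneg : St16.ip lam ((0, z) - Pt z) (x - Pt z) = -a := by
      rw [ha, show ((0, z) - Pt z : (Fin p → ℝ) × (Fin n → ℝ)) = -(Pt z - (0, z)) by abel,
        St16.ip_neg_left]
    rw [hneg]; linarith
  -- uniqueness of the minimizer
  have huniq : ∀ z (x : (Fin p → ℝ) × (Fin n → ℝ)),
      (∀ i, A i ⬝ᵥ x.1 + B i ⬝ᵥ x.2 ≤ c i) →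
      (∀ x' : (Fin p → ℝ) × (Fin n → ℝ), (∀ i, A i ⬝ᵥ x'.1 + B i ⬝ᵥ x'.2 ≤ c i) →
        St16.objS lam z x ≤ St16.objS lam z x') →
      x = Pt z := by
    intro z x hx hxmin
    have h1 : St16.objS lam z (Pt z) ≤ St16.objS lam z x := hminP z x hx
    have h2 : St16.objS lam z x ≤ St16.objS lam z (Pt z) := hxmin (Pt z) (hfeaP z)
    have hfm : ∀ i, A i ⬝ᵥ ((1/2 : ℝ) • x + (1/2 : ℝ) • Pt z).1
        + B i ⬝ᵥ ((1/2 : ℝ) • x + (1/2 : ℝ) • Pt z).2 ≤ c i := by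
      intro i
      have e : A i ⬝ᵥ ((1/2 : ℝ) • x + (1/2 : ℝ) • Pt z).1
          + B i ⬝ᵥ ((1/2 : ℝ) • x + (1/2 : ℝ) • Pt z).2
          = (1/2) * (A i ⬝ᵥ x.1 + B i ⬝ᵥ x.2)
            + (1/2) * (A i ⬝ᵥ (Pt z).1 + B i ⬝ᵥ (Pt z).2) := by
        simp only [Prod.fst_add, Prod.snd_add, Prod.smul_fst, Prod.smul_snd,
          dotProduct_add, dotProduct_smul, smul_eq_mul]
        ring
      rw [e]; nlinarith [hx i, hfeaP z i]
    have h3 := hminP z _ hfm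
    have h4 := St16.objS_midpoint lam z x (Pt z)
    have h5 : St16.ip lam (x - Pt z) (x - Pt z) ≤ 0 := by linarith
    have h6 := St16.eq_zero_of_ip_self_nonpos hlam h5
    exact sub_eq_zero.mp h6
  -- the coincidence sets
  let K : Set (Fin m) → Set (Fin n → ℝ) := fun J =>
    {z | (∀ i ∈ J, A i ⬝ᵥ (Pt z).1 + B i ⬝ᵥ (Pt z).2 = c i) ∧
      ∀ v : (Fin p → ℝ) × (Fin n → ℝ), (∀ i ∈ J, A i ⬝ᵥ v.1 + B i ⬝ᵥ v.2 = 0) →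
        St16.ip lam ((0, z) - Pt z) v = 0}
  -- convexity of the coincidence sets
  have hconv : ∀ J : Set (Fin m), Convex ℝ (K J) := by
    intro J z1 hz1 z2 hz2 t s ht hs hts
    obtain ⟨hz1e, hz1o⟩ := hz1
    obtain ⟨hz2e, hz2o⟩ := hz2
    have h1t : (1:ℝ) - t = s := by linarith
    have h1s : (1:ℝ) - s = t := by linarith
    have hw0 : ((0, t • z1 + s • z2) : (Fin p → ℝ) × (Fin n → ℝ))
        = t • ((0, z1) : (Fin p → ℝ) × (Fin n → ℝ))
          + s • ((0, z2) : (Fin p → ℝ) × (Fin n → ℝ)) := by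
      ext j
      · simp
      · simp
    have hwt : (t • Pt z1 + s • Pt z2) - ((0, t • z1 + s • z2) : (Fin p → ℝ) × (Fin n → ℝ))
        = t • (Pt z1 - (0, z1)) + s • (Pt z2 - (0, z2)) := by
      rw [hw0]; module
    have hfxt : ∀ i, A i ⬝ᵥ (t • Pt z1 + s • Pt z2).1 + B i ⬝ᵥ (t • Pt z1 + s • Pt z2).2
        ≤ c i := by
      intro i
      have e : A i ⬝ᵥ (t • Pt z1 + s • Pt z2).1 + B i ⬝ᵥ (t • Pt z1 + s • Pt z2).2
          = t * (A i ⬝ᵥ (Pt z1).1 + B i ⬝ᵥ (Pt z1).2)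
            + s * (A i ⬝ᵥ (Pt z2).1 + B i ⬝ᵥ (Pt z2).2) := by
        simp only [Prod.fst_add, Prod.snd_add, Prod.smul_fst, Prod.smul_snd,
          dotProduct_add, dotProduct_smul, smul_eq_mul]
        ring
      have hsum : t * c i + s * c i = c i := by linear_combination (c i) * hts
      rw [e]
      nlinarith [mul_le_mul_of_nonneg_left (hfeaP z1 i) ht,
        mul_le_mul_of_nonneg_left (hfeaP z2 i) hs]
    have hv12 : ∀ i ∈ J, A i ⬝ᵥ (Pt z1 - Pt z2).1 + B i ⬝ᵥ (Pt z1 - Pt z2).2 = 0 := by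
      intro i hi
      simp only [Prod.fst_sub, Prod.snd_sub, dotProduct_sub]
      have e1 := hz1e i hi
      have e2 := hz2e i hi
      linarith
    have hv21 : ∀ i ∈ J, A i ⬝ᵥ (Pt z2 - Pt z1).1 + B i ⬝ᵥ (Pt z2 - Pt z1).2 = 0 := by
      intro i hi
      simp only [Prod.fst_sub, Prod.snd_sub, dotProduct_sub]
      have e1 := hz1e i hi
      have e2 := hz2e i hi
      linarith
    have hminxt : ∀ x' : (Fin p → ℝ) × (Fin n → ℝ),
        (∀ i, A i ⬝ᵥ x'.1 + B i ⬝ᵥ x'.2 ≤ c i) →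
        St16.objS lam (t • z1 + s • z2) (t • Pt z1 + s • Pt z2)
          ≤ St16.objS lam (t • z1 + s • z2) x' := by
      intro x' hx'
      have hexp := St16.objS_expand lam (t • z1 + s • z2) x' (t • Pt z1 + s • Pt z2)
      have hA : 0 ≤ St16.ip lam (Pt z1 - (0, z1)) (x' - (t • Pt z1 + s • Pt z2)) := by
        have d1 : x' - (t • Pt z1 + s • Pt z2) = (x' - Pt z1) + s • (Pt z1 - Pt z2) := by
          rw [← h1t]; module
        rw [d1, St16.ip_add_right, St16.ip_smul_right]
        have hn1 : St16.ip lam (Pt z1 - (0, z1)) (x' - Pt z1)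
            = -St16.ip lam ((0, z1) - Pt z1) (x' - Pt z1) := by
          rw [show (Pt z1 - (0, z1) : (Fin p → ℝ) × (Fin n → ℝ)) = -((0, z1) - Pt z1) by abel,
            St16.ip_neg_left]
        have hn2 : St16.ip lam (Pt z1 - (0, z1)) (Pt z1 - Pt z2)
            = -St16.ip lam ((0, z1) - Pt z1) (Pt z1 - Pt z2) := by
          rw [show (Pt z1 - (0, z1) : (Fin p → ℝ) × (Fin n → ℝ)) = -((0, z1) - Pt z1) by abel,
            St16.ip_neg_left]
        rw [hn1, hn2, hz1o _ hv12]
        have := hVI z1 x' hx'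
        simp only [neg_zero, mul_zero, add_zero]
        linarith
      have hB : 0 ≤ St16.ip lam (Pt z2 - (0, z2)) (x' - (t • Pt z1 + s • Pt z2)) := by
        have d2 : x' - (t • Pt z1 + s • Pt z2) = (x' - Pt z2) + t • (Pt z2 - Pt z1) := by
          rw [← h1s]; module
        rw [d2, St16.ip_add_right, St16.ip_smul_right]
        have hn1 : St16.ip lam (Pt z2 - (0, z2)) (x' - Pt z2)
            = -St16.ip lam ((0, z2) - Pt z2) (x' - Pt z2) := by
          rw [show (Pt z2 - (0, z2) : (Fin p → ℝ) × (Fin n → ℝ)) = -((0, z2) - Pt z2) by abel,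
            St16.ip_neg_left]
        have hn2 : St16.ip lam (Pt z2 - (0, z2)) (Pt z2 - Pt z1)
            = -St16.ip lam ((0, z2) - Pt z2) (Pt z2 - Pt z1) := by
          rw [show (Pt z2 - (0, z2) : (Fin p → ℝ) × (Fin n → ℝ)) = -((0, z2) - Pt z2) by abel,
            St16.ip_neg_left]
        rw [hn1, hn2, hz2o _ hv21]
        have := hVI z2 x' hx'
        simp only [neg_zero, mul_zero, add_zero]
        linarith
      have hkey : 0 ≤ St16.ip lam ((t • Pt z1 + s • Pt z2) - (0, t • z1 + s • z2))
          (x' - (t • Pt z1 + s • Pt z2)) := by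
        rw [hwt, St16.ip_add_left, St16.ip_smul_left, St16.ip_smul_left]
        exact add_nonneg (mul_nonneg ht hA) (mul_nonneg hs hB)
      have hq := St16.ip_self_nonneg hlam.le (x' - (t • Pt z1 + s • Pt z2))
      linarith [hexp]
    have hxteq : t • Pt z1 + s • Pt z2 = Pt (t • z1 + s • z2) :=
      huniq _ _ hfxt hminxt
    constructor
    · intro i hi
      rw [← hxteq]
      have e : A i ⬝ᵥ (t • Pt z1 + s • Pt z2).1 + B i ⬝ᵥ (t • Pt z1 + s • Pt z2).2
          = t * (A i ⬝ᵥ (Pt z1).1 + B i ⬝ᵥ (Pt z1).2)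
            + s * (A i ⬝ᵥ (Pt z2).1 + B i ⬝ᵥ (Pt z2).2) := by
        simp only [Prod.fst_add, Prod.snd_add, Prod.smul_fst, Prod.smul_snd,
          dotProduct_add, dotProduct_smul, smul_eq_mul]
        ring
      rw [e, hz1e i hi, hz2e i hi]
      linear_combination (c i) * hts
    · intro v hv
      rw [← hxteq]
      have e : ((0, t • z1 + s • z2) : (Fin p → ℝ) × (Fin n → ℝ)) - (t • Pt z1 + s • Pt z2)
          = t • (((0, z1) : (Fin p → ℝ) × (Fin n → ℝ)) - Pt z1)
            + s • (((0, z2) : (Fin p → ℝ) × (Fin n → ℝ)) - Pt z2) := by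
        calc ((0, t • z1 + s • z2) : (Fin p → ℝ) × (Fin n → ℝ)) - (t • Pt z1 + s • Pt z2)
            = -((t • Pt z1 + s • Pt z2) - ((0, t • z1 + s • z2) : (Fin p → ℝ) × (Fin n → ℝ)))
              := by abel
          _ = -(t • (Pt z1 - (0, z1)) + s • (Pt z2 - (0, z2))) := by rw [hwt]
          _ = t • (((0, z1) : (Fin p → ℝ) × (Fin n → ℝ)) - Pt z1)
              + s • (((0, z2) : (Fin p → ℝ) × (Fin n → ℝ)) - Pt z2) := by module
      rw [e, St16.ip_add_left, St16.ip_smul_left, St16.ip_smul_left, hz1o v hv, hz2o v hv]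
      ring
  -- every point belongs to the coincidence set of its own active set
  have hmemK : ∀ y : Fin n → ℝ,
      y ∈ K {i : Fin m | A i ⬝ᵥ ξhat y + B i ⬝ᵥ θhat y = c i} := by
    intro y
    refine ⟨fun i hi => hi, ?_⟩
    intro v hv
    have hsv0 : 0 ≤ St16.ip lam v v := St16.ip_self_nonneg hlam.le v
    have hplus : ∀ᶠ ε in 𝓝[>] (0:ℝ),
        ∀ i, A i ⬝ᵥ (Pt y + ε • v).1 + B i ⬝ᵥ (Pt y + ε • v).2 ≤ c i := by
      rw [eventually_all]
      intro i
      have eplus : ∀ ε : ℝ, A i ⬝ᵥ (Pt y + ε • v).1 + B i ⬝ᵥ (Pt y + ε • v).2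
          = (A i ⬝ᵥ (Pt y).1 + B i ⬝ᵥ (Pt y).2) + ε * (A i ⬝ᵥ v.1 + B i ⬝ᵥ v.2) := by
        intro ε
        simp only [Prod.fst_add, Prod.snd_add, Prod.smul_fst, Prod.smul_snd,
          dotProduct_add, dotProduct_smul, smul_eq_mul]
        ring
      by_cases hi : A i ⬝ᵥ ξhat y + B i ⬝ᵥ θhat y = c i
      · filter_upwards with ε
        rw [eplus ε, hv i hi, mul_zero, add_zero]
        exact hfeaP y i
      · have hlt : A i ⬝ᵥ (Pt y).1 + B i ⬝ᵥ (Pt y).2 < c i :=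
          lt_of_le_of_ne (hfeaP y i) hi
        have hcont : Tendsto (fun ε : ℝ => (A i ⬝ᵥ (Pt y).1 + B i ⬝ᵥ (Pt y).2)
            + ε * (A i ⬝ᵥ v.1 + B i ⬝ᵥ v.2)) (𝓝[>] 0)
            (𝓝 (A i ⬝ᵥ (Pt y).1 + B i ⬝ᵥ (Pt y).2)) := by
          have h := (tendsto_const_nhds (x := A i ⬝ᵥ (Pt y).1 + B i ⬝ᵥ (Pt y).2)
            (f := 𝓝 (0:ℝ))).add (tendsto_id.mul_const (A i ⬝ᵥ v.1 + B i ⬝ᵥ v.2))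
          simpa using h.mono_left nhdsWithin_le_nhds
        filter_upwards [hcont.eventually_lt_const hlt] with ε hε
        rw [eplus ε]
        linarith
    have hminus : ∀ᶠ ε in 𝓝[>] (0:ℝ),
        ∀ i, A i ⬝ᵥ (Pt y - ε • v).1 + B i ⬝ᵥ (Pt y - ε • v).2 ≤ c i := by
      rw [eventually_all]
      intro i
      have eminus : ∀ ε : ℝ, A i ⬝ᵥ (Pt y - ε • v).1 + B i ⬝ᵥ (Pt y - ε • v).2
          = (A i ⬝ᵥ (Pt y).1 + B i ⬝ᵥ (Pt y).2) - ε * (A i ⬝ᵥ v.1 + B i ⬝ᵥ v.2) := by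
        intro ε
        simp only [Prod.fst_sub, Prod.snd_sub, Prod.smul_fst, Prod.smul_snd,
          dotProduct_sub, dotProduct_smul, smul_eq_mul]
        ring
      by_cases hi : A i ⬝ᵥ ξhat y + B i ⬝ᵥ θhat y = c i
      · filter_upwards with ε
        rw [eminus ε, hv i hi, mul_zero, sub_zero]
        exact hfeaP y i
      · have hlt : A i ⬝ᵥ (Pt y).1 + B i ⬝ᵥ (Pt y).2 < c i :=
          lt_of_le_of_ne (hfeaP y i) hi
        have hcont : Tendsto (fun ε : ℝ => (A i ⬝ᵥ (Pt y).1 + B i ⬝ᵥ (Pt y).2)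
            - ε * (A i ⬝ᵥ v.1 + B i ⬝ᵥ v.2)) (𝓝[>] 0)
            (𝓝 (A i ⬝ᵥ (Pt y).1 + B i ⬝ᵥ (Pt y).2)) := by
          have h := (tendsto_const_nhds (x := A i ⬝ᵥ (Pt y).1 + B i ⬝ᵥ (Pt y).2)
            (f := 𝓝 (0:ℝ))).sub (tendsto_id.mul_const (A i ⬝ᵥ v.1 + B i ⬝ᵥ v.2))
          simpa using h.mono_left nhdsWithin_le_nhds
        filter_upwards [hcont.eventually_lt_const hlt] with ε hε
        rw [eminus ε]
        linarith
    have hev : ∀ᶠ ε in 𝓝[>] (0:ℝ),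
        |St16.ip lam ((0, y) - Pt y) v| ≤ ε * St16.ip lam v v / 2 := by
      filter_upwards [hplus, hminus, self_mem_nhdsWithin] with ε hfp hfm hε
      have hε0 : (0:ℝ) < ε := hε
      have h1 := hminP y (Pt y + ε • v) hfp
      have h2 := hminP y (Pt y - ε • v) hfm
      have e1 := St16.objS_expand lam y (Pt y + ε • v) (Pt y)
      have e2 := St16.objS_expand lam y (Pt y - ε • v) (Pt y)
      have s1 : Pt y + ε • v - Pt y = ε • v := by abel
      have s2 : Pt y - ε • v - Pt y = (-ε) • v := by module
      rw [s1] at e1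
      rw [s2] at e2
      simp only [St16.ip_smul_left, St16.ip_smul_right] at e1 e2
      have hgneg : St16.ip lam (Pt y - (0, y)) v = -St16.ip lam ((0, y) - Pt y) v := by
        rw [show (Pt y - (0, y) : (Fin p → ℝ) × (Fin n → ℝ)) = -((0, y) - Pt y) by abel,
          St16.ip_neg_left]
      rw [hgneg] at e1 e2
      rw [abs_le]
      constructor <;> nlinarith [h1, h2, e1, e2, hε0]
    have htend : Tendsto (fun ε : ℝ => ε * St16.ip lam v v / 2) (𝓝[>] 0) (𝓝 0) := by
      have h : Tendsto (fun ε : ℝ => ε * St16.ip lam v v / 2) (𝓝 0)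
          (𝓝 (0 * St16.ip lam v v / 2)) :=
        (tendsto_id.mul_const _).div_const 2
      simpa using h.mono_left nhdsWithin_le_nhds
    have habs : |St16.ip lam ((0, y) - Pt y) v| ≤ 0 := ge_of_tendsto htend hev
    have := le_antisymm habs (abs_nonneg _)
    exact abs_eq_zero.mp this
  -- the null set
  have hnull : volume (⋃ J : Set (Fin m), frontier (K J)) = 0 :=
    measure_iUnion_null fun J => (hconv J).addHaar_frontier _
  have hae := measure_eq_zero_iff_ae_notMem.mp hnull
  filter_upwards [hae] with y hy
  have hyK : y ∈ K {i : Fin m | A i ⬝ᵥ ξhat y + B i ⬝ᵥ θhat y = c i} := hmemK y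
  have hyint : y ∈ interior (K {i : Fin m | A i ⬝ᵥ ξhat y + B i ⬝ᵥ θhat y = c i}) := by
    by_contra hni
    exact hy (Set.mem_iUnion.mpr ⟨_, ⟨subset_closure hyK, hni⟩⟩)
  refine ⟨interior (K {i : Fin m | A i ⬝ᵥ ξhat y + B i ⬝ᵥ θhat y = c i}),
    isOpen_interior, hyint, ?_⟩
  intro z hz
  obtain ⟨hze, hzo⟩ := interior_subset hz
  refine ⟨ξhat z, fun i hi => hze i hi, ?_⟩
  intro ξ θ hξθ
  have hveq : ∀ i ∈ {i : Fin m | A i ⬝ᵥ ξhat y + B i ⬝ᵥ θhat y = c i},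
      A i ⬝ᵥ ((ξ, θ) - Pt z).1 + B i ⬝ᵥ ((ξ, θ) - Pt z).2 = 0 := by
    intro i hi
    simp only [Prod.fst_sub, Prod.snd_sub, dotProduct_sub]
    have h1 := hξθ i hi
    have h2 := hze i hi
    linarith
  have horth := hzo _ hveq
  have hexp := St16.objS_expand lam z (ξ, θ) (Pt z)
  have hgneg : St16.ip lam (Pt z - (0, z)) ((ξ, θ) - Pt z) = 0 := by
    rw [show (Pt z - (0, z) : (Fin p → ℝ) × (Fin n → ℝ)) = -((0, z) - Pt z) by abel,
      St16.ip_neg_left, horth, neg_zero]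
  have hpos := St16.ip_self_nonneg hlam.le ((ξ, θ) - Pt z)
  have hle : St16.objS lam z (Pt z) ≤ St16.objS lam z (ξ, θ) := by
    rw [hexp, hgneg]; linarith
  have e1 : St16.objS lam z (Pt z)
      = (1/2) * (∑ j, (θhat z j - z j) ^ 2) + (lam/2) * (∑ j, (ξhat z j) ^ 2) :=
    St16.objS_eq lam z (ξhat z) (θhat z)
  have e2 := St16.objS_eq lam z ξ θ
  rw [e1, e2] at hle
  convert hle using 2 <;> norm_num
end

section
/- Let Q = {(ξ,θ) ∈ ℝ^{p+n} : Aξ + Bθ ≤ c} be a nonempty polyhedron and let f : ℝᵖ → ℝ be convex and differentiable. For y ∈ ℝⁿ, suppose (θ̂(y), ξ̂(y)) minimizes (1/2)‖θ − y‖₂² + f(ξ) over Q. Then: (i) the θ-component θ̂(y) of any minimizer is unique for each y; (ii) the map y ↦ θ̂(y) is 1-Lipschitz, i.e., ‖θ̂(y₁) − θ̂(y₂)‖₂ ≤ ‖y₁ − y₂‖₂ for all y₁, y₂ ∈ ℝⁿ (and hence θ̂ is differentiable almost everywhere with essentially bounded partial derivatives). -/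
open Matrix
open Finset in
section

private lemma sum_sq_expand {n : ℕ} (t : ℝ) (a b y : Fin n → ℝ) :
    ∑ j, ((1-t) * a j + t * b j - y j)^2
      = ∑ j, (a j - y j)^2 + t * (∑ j, 2 * ((b j - a j)*(a j - y j)))
        + t^2 * ∑ j, (b j - a j)^2 := by
  have h : ∀ j : Fin n, ((1-t)*a j + t*b j - y j)^2
      = (a j - y j)^2 + t * (2*((b j - a j)*(a j - y j))) + t^2 * ((b j - a j)^2) :=
    fun j => by ring
  rw [Finset.sum_congr rfl (fun j _ => h j), Finset.sum_add_distrib, Finset.sum_add_distrib,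
    ← Finset.mul_sum, ← Finset.mul_sum, ← Finset.mul_sum]

private lemma feas_combo {m p n : ℕ} (A : Matrix (Fin m) (Fin p) ℝ) (B : Matrix (Fin m) (Fin n) ℝ)
    (c : Fin m → ℝ) {ξ₁ : Fin p → ℝ} {ξ₂ : Fin p → ℝ} {θ₁ θ₂ : Fin n → ℝ}
    (h₁ : A.mulVec ξ₁ + B.mulVec θ₁ ≤ c)
    (h₂ : A.mulVec ξ₂ + B.mulVec θ₂ ≤ c) {t : ℝ} (ht0 : 0 ≤ t) (ht1 : t ≤ 1) :
    A.mulVec (fun j => (1-t) * ξ₁ j + t * ξ₂ j)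
      + B.mulVec (fun j => (1-t)*θ₁ j + t*θ₂ j) ≤ c := by
  have e1 : (fun j => (1-t) * ξ₁ j + t * ξ₂ j) = (1-t) • ξ₁ + t • ξ₂ := by
    funext j; simp [smul_eq_mul]
  have e2 : (fun j => (1-t) * θ₁ j + t * θ₂ j) = (1-t) • θ₁ + t • θ₂ := by
    funext j; simp [smul_eq_mul]
  rw [e1, e2, Matrix.mulVec_add, Matrix.mulVec_add, Matrix.mulVec_smul, Matrix.mulVec_smul,
    Matrix.mulVec_smul, Matrix.mulVec_smul]
  intro i
  have g1 := h₁ i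
  have g2 := h₂ i
  simp only [Pi.add_apply, Pi.smul_apply, smul_eq_mul] at *
  nlinarith

private lemma min_step {p n : ℕ} (f : (Fin p → ℝ) → ℝ) (hconv : ConvexOn ℝ Set.univ f)
    (y : Fin n → ℝ) (ξa ξb : Fin p → ℝ) (θa θb : Fin n → ℝ) {t : ℝ}
    (ht0 : 0 ≤ t) (ht1 : t ≤ 1)
    (hle : (1/2) * (∑ j, (θa j - y j)^2) + f ξa
        ≤ (1/2) * (∑ j, ((1-t)*θa j + t*θb j - y j)^2) + f (fun j => (1-t)*ξa j + t*ξb j)) :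
    0 ≤ t * (∑ j, 2 * ((θb j - θa j)*(θa j - y j))) + t^2 * (∑ j, (θb j - θa j)^2)
        + 2 * t * (f ξb - f ξa) := by
  have e1 : (fun j => (1-t) * ξa j + t * ξb j) = (1-t) • ξa + t • ξb := by
    funext j; simp [smul_eq_mul]
  have hf : f (fun j => (1-t)*ξa j + t*ξb j) ≤ (1-t) * f ξa + t * f ξb := by
    rw [e1]
    exact hconv.2 (Set.mem_univ ξa) (Set.mem_univ ξb) (by linarith) ht0 (by ring)
  rw [sum_sq_expand t θa θb y] at hle
  nlinarith

private lemma monotone_key {m p n : ℕ} {A : Matrix (Fin m) (Fin p) ℝ}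
    {B : Matrix (Fin m) (Fin n) ℝ} {c : Fin m → ℝ}
    (f : (Fin p → ℝ) → ℝ) (hconv : ConvexOn ℝ Set.univ f)
    (y₁ y₂ : Fin n → ℝ) (ξ₁ ξ₂ : Fin p → ℝ) (θ₁ θ₂ : Fin n → ℝ)
    (h₁feas : A.mulVec ξ₁ + B.mulVec θ₁ ≤ c) (h₂feas : A.mulVec ξ₂ + B.mulVec θ₂ ≤ c)
    (h₁min : ∀ ξ θ, A.mulVec ξ + B.mulVec θ ≤ c →
      (1/2) * (∑ j, (θ₁ j - y₁ j)^2) + f ξ₁ ≤ (1/2) * (∑ j, (θ j - y₁ j)^2) + f ξ)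
    (h₂min : ∀ ξ θ, A.mulVec ξ + B.mulVec θ ≤ c →
      (1/2) * (∑ j, (θ₂ j - y₂ j)^2) + f ξ₂ ≤ (1/2) * (∑ j, (θ j - y₂ j)^2) + f ξ) :
    ∑ j, (θ₁ j - θ₂ j)^2 ≤ ∑ j, (θ₁ j - θ₂ j) * (y₁ j - y₂ j) := by
  set D : ℝ := ∑ j, (θ₁ j - θ₂ j)^2 with hD
  set I : ℝ := ∑ j, (θ₁ j - θ₂ j) * (y₁ j - y₂ j) with hI
  have hD0 : 0 ≤ D := Finset.sum_nonneg fun j _ => sq_nonneg _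
  have key : ∀ t : ℝ, 0 < t → t ≤ 1 → (1 - t) * D ≤ I := by
    intro t ht0 ht1
    have s₁ := min_step f hconv y₁ ξ₁ ξ₂ θ₁ θ₂ ht0.le ht1
      (h₁min _ _ (feas_combo A B c h₁feas h₂feas ht0.le ht1))
    have s₂ := min_step f hconv y₂ ξ₂ ξ₁ θ₂ θ₁ ht0.le ht1
      (h₂min _ _ (feas_combo A B c h₂feas h₁feas ht0.le ht1))
    -- rewrite the sums
    have e₁ : (∑ j, (θ₁ j - θ₂ j)^2 : ℝ) = ∑ j, (θ₂ j - θ₁ j)^2 :=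
      Finset.sum_congr rfl fun j _ => by ring
    have e₂ : (∑ j, 2 * ((θ₂ j - θ₁ j)*(θ₁ j - y₁ j)) : ℝ)
        + (∑ j, 2 * ((θ₁ j - θ₂ j)*(θ₂ j - y₂ j)))
        = 2 * I - 2 * D := by
      rw [← Finset.sum_add_distrib, hI, hD, Finset.mul_sum, Finset.mul_sum,
        ← Finset.sum_sub_distrib]
      exact Finset.sum_congr rfl fun j _ => by ring
    have hcomb : 0 ≤ t * (2 * I - 2 * D) + 2 * t^2 * D := by nlinarith [s₁, s₂, e₁, e₂]
    have h2 : 0 ≤ t * ((2*I - 2*D) + 2 * t * D) := by nlinarith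
    have : 0 ≤ (2*I - 2*D) + 2 * t * D := (mul_nonneg_iff_of_pos_left ht0).mp h2
    nlinarith
  refine le_of_forall_pos_le_add fun ε hε => ?_
  rcases le_or_gt D 0 with hle | hpos
  · have := key (1/2) (by norm_num) (by norm_num)
    nlinarith
  · set t : ℝ := min 1 (ε / D) with htdef
    have htpos : 0 < t := lt_min one_pos (div_pos hε hpos)
    have ht1 : t ≤ 1 := min_le_left _ _
    have htD : t * D ≤ ε := by
      have : t ≤ ε / D := min_le_right _ _
      calc t * D ≤ (ε / D) * D := by nlinarith
        _ = ε := by field_simp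
    have := key t htpos ht1
    nlinarith
end

/-- Perturbed partial projection with a convex differentiable
perturbation `f` of the auxiliary variables: (i) the θ-component of any minimizer of
`(1/2)‖θ − y‖₂² + f(ξ)` over `Q = {(ξ,θ) : Aξ + Bθ ≤ c}` is unique; (ii) the map
`y ↦ θ̂(y)` is 1-Lipschitz for the Euclidean norm. -/
theorem partial_projection_unique_and_lipschitz {m p n : ℕ}
    (A : Matrix (Fin m) (Fin p) ℝ) (B : Matrix (Fin m) (Fin n) ℝ) (c : Fin m → ℝ)
    (hQ : ∃ ξ : Fin p → ℝ, ∃ θ : Fin n → ℝ, A.mulVec ξ + B.mulVec θ ≤ c)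
    (f : (Fin p → ℝ) → ℝ)
    (hconv : ConvexOn ℝ Set.univ f) (hdiff : Differentiable ℝ f)
    (θhat : (Fin n → ℝ) → (Fin n → ℝ)) (ξhat : (Fin n → ℝ) → (Fin p → ℝ))
    (hmin : ∀ y, A.mulVec (ξhat y) + B.mulVec (θhat y) ≤ c ∧
      ∀ ξ θ, A.mulVec ξ + B.mulVec θ ≤ c →
        (1 / 2) * (∑ j, (θhat y j - y j) ^ 2) + f (ξhat y)
          ≤ (1 / 2) * (∑ j, (θ j - y j) ^ 2) + f ξ) :
    (∀ y, ∀ ξ' : Fin p → ℝ, ∀ θ' : Fin n → ℝ,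
      (A.mulVec ξ' + B.mulVec θ' ≤ c ∧
        ∀ ξ θ, A.mulVec ξ + B.mulVec θ ≤ c →
          (1 / 2) * (∑ j, (θ' j - y j) ^ 2) + f ξ'
            ≤ (1 / 2) * (∑ j, (θ j - y j) ^ 2) + f ξ) → θ' = θhat y) ∧
    (∀ y₁ y₂ : Fin n → ℝ,
      Real.sqrt (∑ j, (θhat y₁ j - θhat y₂ j) ^ 2)
        ≤ Real.sqrt (∑ j, (y₁ j - y₂ j) ^ 2)) := by
  constructor
  · intro y ξ' θ' ⟨hfeas', hmin'⟩
    obtain ⟨hfeas, hm⟩ := hmin y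
    have hkey := monotone_key f hconv y y ξ' (ξhat y) θ' (θhat y) hfeas' hfeas hmin' hm
    have hI : (∑ j, (θ' j - θhat y j) * (y j - y j) : ℝ) = 0 := by simp
    rw [hI] at hkey
    funext j
    have hterm : (θ' j - θhat y j)^2 ≤ 0 :=
      le_trans (Finset.single_le_sum (fun i _ => sq_nonneg (θ' i - θhat y i))
        (Finset.mem_univ j)) hkey
    nlinarith [sq_nonneg (θ' j - θhat y j)]
  · intro y₁ y₂
    obtain ⟨hfeas₁, hm₁⟩ := hmin y₁
    obtain ⟨hfeas₂, hm₂⟩ := hmin y₂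
    have hkey := monotone_key f hconv y₁ y₂ (ξhat y₁) (ξhat y₂) (θhat y₁) (θhat y₂)
      hfeas₁ hfeas₂ hm₁ hm₂
    set D : ℝ := ∑ j, (θhat y₁ j - θhat y₂ j)^2 with hD
    set E : ℝ := ∑ j, (y₁ j - y₂ j)^2 with hE
    have hcs : (∑ j, (θhat y₁ j - θhat y₂ j) * (y₁ j - y₂ j) : ℝ)
        ≤ Real.sqrt D * Real.sqrt E :=
      Real.sum_mul_le_sqrt_mul_sqrt _ _ _
    have hD0 : 0 ≤ D := Finset.sum_nonneg fun j _ => sq_nonneg _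
    have hDs : D = Real.sqrt D ^ 2 := (Real.sq_sqrt hD0).symm
    have hcomb : Real.sqrt D ^ 2 ≤ Real.sqrt D * Real.sqrt E := by
      rw [← hDs]; exact hkey.trans hcs
    rcases eq_or_lt_of_le (Real.sqrt_nonneg D) with h0 | h0
    · rw [← h0]; exact Real.sqrt_nonneg E
    · nlinarith
end
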